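/- arXiv:1911.03259 — 4 statements merged into one kernel-verified Lean document; each statement's English description precedes it below -/
import Mathlib

section
/- The map Φ sending a plane partition π with at most n rows and entries at most m to the n×m matrix D = (d_{iℓ}), where d_{iℓ} is the number of columns j such that π_{ij} = ℓ > π_{i+1,j}, is a bijection between the set of such plane partitions and the set of n×m matrices with nonnegative integer entries. -/
open scoped BigOperators

/-- A plane partition: a finitely supported `ℕ`-array (0-indexed) weakly
decreasing along rows and columns. -/
structure PlanePartition where
  entry : ℕ → ℕ → ℕ
  row_decr : ∀ i j, entry i (j + 1) ≤ entry i j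
  col_decr : ∀ i j, entry (i + 1) j ≤ entry i j
  finite_support : {p : ℕ × ℕ | entry p.1 p.2 ≠ 0}.Finite

namespace PlanePartition

/-- `π` has at most `n` (nonzero) rows. -/
def RowsLE (π : PlanePartition) (n : ℕ) : Prop := ∀ i j, n ≤ i → π.entry i j = 0

/-- `π` has at most `k` (nonzero) columns. -/
def ColsLE (π : PlanePartition) (k : ℕ) : Prop := ∀ i j, k ≤ j → π.entry i j = 0

/-- all entries of `π` are at most `m`. -/
def EntriesLE (π : PlanePartition) (m : ℕ) : Prop := ∀ i j, π.entry i j ≤ m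

/-- The descent set of `π` (0-indexed cells). -/
def Des (π : PlanePartition) : Set (ℕ × ℕ) :=
  {p | π.entry (p.1 + 1) p.2 < π.entry p.1 p.2}

/-- number of descents of `π`. -/
noncomputable def des (π : PlanePartition) : ℕ := π.Des.ncard

/-- `dmat π i ℓ` is the matrix entry `d_{i+1, ℓ+1}` of `Φ(π)`: the number of columns `j`
with `π_{ij} = ℓ+1 > π_{i+1,j}` (here `i`, `ℓ` are 0-indexed). -/
noncomputable def dmat (π : PlanePartition) (i ℓ : ℕ) : ℕ :=
  {j : ℕ | π.entry i j = ℓ + 1 ∧ π.entry (i + 1) j ≤ ℓ}.ncard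

/-- the volume `|π|`. -/
noncomputable def vol (π : PlanePartition) : ℕ := ∑ᶠ p : ℕ × ℕ, π.entry p.1 p.2

/-- the up-hook volume `|π|_{uh} = Σ_{(i,j) ∈ Des(π)} (π_{ij} + i - 1)` (1-indexed `i`;
in our 0-indexed convention the summand is `π.entry p.1 p.2 + p.1`). -/
noncomputable def uhvol (π : PlanePartition) : ℕ :=
  ∑ᶠ p ∈ π.Des, (π.entry p.1 p.2 + p.1)

/-- the corner volume `|π|_c = Σ_{(i,j) ∈ Des(π)} π_{ij}`. -/
noncomputable def cvol (π : PlanePartition) : ℕ :=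
  ∑ᶠ p ∈ π.Des, π.entry p.1 p.2

/-- the trace `tr(π) = Σ_i π_{ii}`. -/
noncomputable def trace (π : PlanePartition) : ℕ := ∑ᶠ i : ℕ, π.entry i i

/-- `colCount π v` is the number of columns of `π` containing the entry `v`. -/
noncomputable def colCount (π : PlanePartition) (v : ℕ) : ℕ :=
  {j : ℕ | ∃ i, π.entry i j = v}.ncard

/-- the length of row `i` (0-indexed) of `π`. -/
noncomputable def rowLen (π : PlanePartition) (i : ℕ) : ℕ :=
  {j : ℕ | π.entry i j ≠ 0}.ncard

/-- `π` is column-strict: entries strictly decrease down the columns (within the shape). -/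
def ColStrict (π : PlanePartition) : Prop :=
  ∀ i j, π.entry i j ≠ 0 → π.entry (i + 1) j < π.entry i j

/-- the shape of `π` is exactly the rectangle with `n` rows and `k` columns. -/
def ShapeRect (π : PlanePartition) (k n : ℕ) : Prop :=
  ∀ i j, π.entry i j ≠ 0 ↔ i < n ∧ j < k

end PlanePartition

/-- The Schur polynomial `s_{(k^n)}` of rectangular shape `(k^n)` in `N` variables
`x 0, …, x (N-1)`, defined via column-strict plane partitions of shape `(k^n)` with
entries at most `N`; the variable `x i` records entries equal to `i + 1`. -/
noncomputable def schurRect {R : Type*} [CommSemiring R] (k n N : ℕ) (x : ℕ → R) : R :=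
  ∑ᶠ π ∈ {π : PlanePartition | π.ColStrict ∧ π.ShapeRect k n ∧ π.EntriesLE N},
    ∏ i ∈ Finset.range N, x i ^ ({p : ℕ × ℕ | π.entry p.1 p.2 = i + 1}.ncard)

namespace PhiAux

open PlanePartition

lemma ppext {π π' : PlanePartition} (h : π.entry = π'.entry) : π = π' := by
  cases π; cases π'; cases h; rfl

lemma mem_iff_lt_ncard {S : Set ℕ} (hfin : S.Finite)
    (hdown : ∀ {j k : ℕ}, j ≤ k → k ∈ S → j ∈ S) {j : ℕ} : j ∈ S ↔ j < S.ncard := by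
  constructor
  · intro hj
    have h1 : Set.Iic j ⊆ S := fun k hk => hdown hk hj
    have h2 := Set.ncard_le_ncard h1 hfin
    rwa [← Finset.coe_Iic, Set.ncard_coe_finset, Nat.card_Iic] at h2
  · intro hj
    by_contra hc
    have h2 : S ⊆ Set.Iio j := by
      intro k hk
      simp only [Set.mem_Iio]
      by_contra hk'
      exact hc (hdown (by omega) hk)
    have h3 := Set.ncard_le_ncard h2 (Set.finite_Iio j)
    rw [← Finset.coe_range, Set.ncard_coe_finset, Finset.card_range] at h3
    omega

/-- the number of entries `≥ ℓ+1` in row `i`. -/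
noncomputable def apat (π : PlanePartition) (i ℓ : ℕ) : ℕ :=
  {j : ℕ | ℓ + 1 ≤ π.entry i j}.ncard

lemma apat_set_fin (π : PlanePartition) (i ℓ : ℕ) :
    {j : ℕ | ℓ + 1 ≤ π.entry i j}.Finite := by
  have hinj : Set.InjOn (fun j : ℕ => (i, j))
      ((fun j : ℕ => (i, j)) ⁻¹' {p : ℕ × ℕ | π.entry p.1 p.2 ≠ 0}) :=
    fun a _ b _ h => congrArg Prod.snd h
  apply Set.Finite.subset (π.finite_support.preimage hinj)
  intro j hj
  simp only [Set.mem_preimage, Set.mem_setOf_eq] at hj ⊢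
  omega

lemma row_anti (π : PlanePartition) (i : ℕ) : Antitone (π.entry i) :=
  antitone_nat_of_succ_le (fun j => π.row_decr i j)

lemma lt_apat_iff (π : PlanePartition) (i ℓ j : ℕ) :
    j < apat π i ℓ ↔ ℓ + 1 ≤ π.entry i j := by
  rw [apat, ← mem_iff_lt_ncard (apat_set_fin π i ℓ)
    (fun {a b} hab hb => le_trans hb (row_anti π i hab))]
  rfl

lemma nat_le_of_forall_lt {a b : ℕ} (h : ∀ j, j < a → j < b) : a ≤ b := by
  by_contra hc
  exact absurd (h b (by omega)) (by omega)

lemma apat_succ_le (π : PlanePartition) (i ℓ : ℕ) : apat π i (ℓ + 1) ≤ apat π i ℓ := by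
  apply nat_le_of_forall_lt
  intro j hj
  rw [lt_apat_iff] at hj ⊢
  omega

lemma apat_row_le (π : PlanePartition) (i ℓ : ℕ) : apat π (i + 1) ℓ ≤ apat π i ℓ := by
  apply nat_le_of_forall_lt
  intro j hj
  rw [lt_apat_iff] at hj ⊢
  exact le_trans hj (π.col_decr i j)

lemma apat_eq_zero_aux {π : PlanePartition} {i ℓ : ℕ} (h : ∀ j, π.entry i j ≤ ℓ) :
    apat π i ℓ = 0 := by
  by_contra hc
  have h0 : 0 < apat π i ℓ := by omega
  rw [lt_apat_iff] at h0
  exact absurd (h 0) (by omega)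

lemma apat_zero_rows' {π : PlanePartition} {n : ℕ} (h : π.RowsLE n) {i : ℕ} (hi : n ≤ i)
    (ℓ : ℕ) : apat π i ℓ = 0 :=
  apat_eq_zero_aux (fun j => by rw [h i j hi]; omega)

lemma apat_zero_entries {π : PlanePartition} {m : ℕ} (h : π.EntriesLE m) {ℓ : ℕ}
    (hl : m ≤ ℓ) (i : ℕ) : apat π i ℓ = 0 :=
  apat_eq_zero_aux (fun j => le_trans (h i j) hl)

lemma dmat_eq (π : PlanePartition) (i ℓ : ℕ) :
    π.dmat i ℓ = apat π i ℓ - max (apat π i (ℓ + 1)) (apat π (i + 1) ℓ) := by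
  have hset : {j : ℕ | π.entry i j = ℓ + 1 ∧ π.entry (i + 1) j ≤ ℓ}
      = Set.Ico (max (apat π i (ℓ + 1)) (apat π (i + 1) ℓ)) (apat π i ℓ) := by
    ext j
    have h1 := lt_apat_iff π i ℓ j
    have h2 := lt_apat_iff π i (ℓ + 1) j
    have h3 := lt_apat_iff π (i + 1) ℓ j
    simp only [Set.mem_setOf_eq, Set.mem_Ico, max_le_iff]
    omega
  rw [PlanePartition.dmat, hset, ← Finset.coe_Ico, Set.ncard_coe_finset, Nat.card_Ico]

lemma apat_rec (π : PlanePartition) (i ℓ : ℕ) :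
    apat π i ℓ = max (apat π i (ℓ + 1)) (apat π (i + 1) ℓ) + π.dmat i ℓ := by
  have h1 := apat_succ_le π i ℓ
  have h2 := apat_row_le π i ℓ
  have h3 := dmat_eq π i ℓ
  omega

/-- the inverse construction on level counts. -/
def Ainv (n m : ℕ) (D : ℕ → ℕ → ℕ) : ℕ → ℕ → ℕ
  | i, ℓ =>
    if h : i < n ∧ ℓ < m then
      max (Ainv n m D i (ℓ + 1)) (Ainv n m D (i + 1) ℓ) + D i ℓ
    else 0
  termination_by i ℓ => (n - i) + (m - ℓ)
  decreasing_by all_goals omega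

lemma Ainv_eq (n m : ℕ) (D : ℕ → ℕ → ℕ) (i ℓ : ℕ) :
    Ainv n m D i ℓ = if i < n ∧ ℓ < m then
      max (Ainv n m D i (ℓ + 1)) (Ainv n m D (i + 1) ℓ) + D i ℓ
    else 0 := by
  rw [Ainv]
  split <;> simp_all

lemma Ainv_zero (n m : ℕ) (D : ℕ → ℕ → ℕ) {i ℓ : ℕ} (h : ¬(i < n ∧ ℓ < m)) :
    Ainv n m D i ℓ = 0 := by
  rw [Ainv_eq, if_neg h]

lemma Ainv_succ_l_le (n m : ℕ) (D : ℕ → ℕ → ℕ) (i ℓ : ℕ) :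
    Ainv n m D i (ℓ + 1) ≤ Ainv n m D i ℓ := by
  rw [Ainv_eq n m D i ℓ]
  split
  · exact le_trans (le_max_left _ _) (Nat.le_add_right _ _)
  · rename_i h
    rw [Ainv_zero n m D (by omega)]

lemma Ainv_succ_i_le (n m : ℕ) (D : ℕ → ℕ → ℕ) (i ℓ : ℕ) :
    Ainv n m D (i + 1) ℓ ≤ Ainv n m D i ℓ := by
  rw [Ainv_eq n m D i ℓ]
  split
  · exact le_trans (le_max_right _ _) (Nat.le_add_right _ _)
  · rename_i h
    rw [Ainv_zero n m D (by omega)]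

lemma Ainv_anti_l (n m : ℕ) (D : ℕ → ℕ → ℕ) (i : ℕ) {ℓ ℓ' : ℕ} (h : ℓ ≤ ℓ') :
    Ainv n m D i ℓ' ≤ Ainv n m D i ℓ :=
  antitone_nat_of_succ_le (Ainv_succ_l_le n m D i) h

lemma Ainv_anti_i (n m : ℕ) (D : ℕ → ℕ → ℕ) (ℓ : ℕ) {i i' : ℕ} (h : i ≤ i') :
    Ainv n m D i' ℓ ≤ Ainv n m D i ℓ :=
  antitone_nat_of_succ_le (f := fun k => Ainv n m D k ℓ)
    (fun k => Ainv_succ_i_le n m D k ℓ) h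

lemma Ainv_unique (n m : ℕ) (D : ℕ → ℕ → ℕ) (f : ℕ → ℕ → ℕ)
    (h0 : ∀ i ℓ, ¬(i < n ∧ ℓ < m) → f i ℓ = 0)
    (hrec : ∀ i ℓ, i < n → ℓ < m → f i ℓ = max (f i (ℓ + 1)) (f (i + 1) ℓ) + D i ℓ) :
    ∀ i ℓ, f i ℓ = Ainv n m D i ℓ := by
  have key : ∀ k i ℓ, (n - i) + (m - ℓ) ≤ k → f i ℓ = Ainv n m D i ℓ := by
    intro k
    induction k with
    | zero =>
      intro i ℓ hk
      have hi : ¬(i < n ∧ ℓ < m) := by omega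
      rw [h0 i ℓ hi, Ainv_zero n m D hi]
    | succ k ih =>
      intro i ℓ hk
      by_cases h : i < n ∧ ℓ < m
      · rw [hrec i ℓ h.1 h.2, Ainv_eq, if_pos h, ih i (ℓ + 1) (by omega),
          ih (i + 1) ℓ (by omega)]
      · rw [h0 i ℓ h, Ainv_zero n m D h]
  exact fun i ℓ => key _ i ℓ le_rfl

/-- the entry array built from the inverse level counts. -/
noncomputable def buildEntry (n m : ℕ) (D : ℕ → ℕ → ℕ) (i j : ℕ) : ℕ :=
  ((Finset.range m).filter fun ℓ => j < Ainv n m D i ℓ).card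

lemma build_ge_iff (n m : ℕ) (D : ℕ → ℕ → ℕ) (i j v : ℕ) :
    v + 1 ≤ buildEntry n m D i j ↔ j < Ainv n m D i v := by
  constructor
  · intro h
    by_contra hc
    have hsub : ((Finset.range m).filter fun ℓ => j < Ainv n m D i ℓ) ⊆ Finset.range v := by
      intro ℓ hl
      simp only [Finset.mem_filter, Finset.mem_range] at hl ⊢
      by_contra hv
      exact hc (lt_of_lt_of_le hl.2 (Ainv_anti_l n m D i (by omega)))
    have hcard := Finset.card_le_card hsub
    rw [Finset.card_range] at hcard
    rw [buildEntry] at h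
    omega
  · intro h
    have hv : v < m := by
      by_contra hvm
      rw [Ainv_zero n m D (by omega)] at h
      omega
    have hsub : Finset.range (v + 1) ⊆ ((Finset.range m).filter fun ℓ => j < Ainv n m D i ℓ) := by
      intro ℓ hl
      simp only [Finset.mem_filter, Finset.mem_range] at hl ⊢
      exact ⟨by omega, lt_of_lt_of_le h (Ainv_anti_l n m D i (by omega))⟩
    have hcard := Finset.card_le_card hsub
    rw [Finset.card_range] at hcard
    rw [buildEntry]
    omega

/-- the inverse plane partition built from a matrix. -/
noncomputable def Psi (n m : ℕ) (D : ℕ → ℕ → ℕ) : PlanePartition where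
  entry := buildEntry n m D
  row_decr := fun i j => by
    apply Finset.card_le_card
    intro ℓ hl
    simp only [Finset.mem_filter] at hl ⊢
    exact ⟨hl.1, by omega⟩
  col_decr := fun i j => by
    apply Finset.card_le_card
    intro ℓ hl
    simp only [Finset.mem_filter] at hl ⊢
    exact ⟨hl.1, lt_of_lt_of_le hl.2 (Ainv_succ_i_le n m D i ℓ)⟩
  finite_support := by
    apply Set.Finite.subset ((Set.finite_Iio n).prod (Set.finite_Iio (Ainv n m D 0 0)))
    rintro ⟨i, j⟩ hij
    simp only [Set.mem_setOf_eq] at hij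
    have h1 : 0 + 1 ≤ buildEntry n m D i j := by omega
    rw [build_ge_iff] at h1
    have hi : i < n := by
      by_contra hin
      rw [Ainv_zero n m D (by omega)] at h1
      omega
    refine ⟨hi, ?_⟩
    exact lt_of_lt_of_le h1 (Ainv_anti_i n m D 0 (Nat.zero_le i))

lemma Psi_rows (n m : ℕ) (D : ℕ → ℕ → ℕ) : (Psi n m D).RowsLE n := by
  intro i j hi
  show buildEntry n m D i j = 0
  by_contra hc
  have h1 : 0 + 1 ≤ buildEntry n m D i j := by omega
  rw [build_ge_iff, Ainv_zero n m D (by omega)] at h1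
  omega

lemma Psi_entries (n m : ℕ) (D : ℕ → ℕ → ℕ) : (Psi n m D).EntriesLE m := by
  intro i j
  show buildEntry n m D i j ≤ m
  calc ((Finset.range m).filter fun ℓ => j < Ainv n m D i ℓ).card
      ≤ (Finset.range m).card := Finset.card_filter_le _ _
    _ = m := Finset.card_range m

lemma apat_Psi (n m : ℕ) (D : ℕ → ℕ → ℕ) (i ℓ : ℕ) :
    apat (Psi n m D) i ℓ = Ainv n m D i ℓ := by
  have hset : {j : ℕ | ℓ + 1 ≤ (Psi n m D).entry i j} = Set.Iio (Ainv n m D i ℓ) := by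
    ext j
    simp only [Set.mem_setOf_eq, Set.mem_Iio]
    exact build_ge_iff n m D i j ℓ
  rw [apat, hset, ← Finset.coe_range, Set.ncard_coe_finset, Finset.card_range]

lemma entry_eq_card (π : PlanePartition) {m : ℕ} (hm : π.EntriesLE m) (i j : ℕ) :
    π.entry i j = ((Finset.range m).filter fun ℓ => j < apat π i ℓ).card := by
  have hset : ((Finset.range m).filter fun ℓ => j < apat π i ℓ)
      = Finset.range (π.entry i j) := by
    ext ℓ
    simp only [Finset.mem_filter, Finset.mem_range, lt_apat_iff]
    have := hm i j
    omega
  rw [hset, Finset.card_range]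

/-- extension of a matrix to a function on `ℕ × ℕ`. -/
def Dext (n m : ℕ) (M : Matrix (Fin n) (Fin m) ℕ) (i ℓ : ℕ) : ℕ :=
  if h : i < n ∧ ℓ < m then M ⟨i, h.1⟩ ⟨ℓ, h.2⟩ else 0

lemma apat_eq_Ainv {n m : ℕ} {π : PlanePartition} (hr : π.RowsLE n) (he : π.EntriesLE m)
    (D : ℕ → ℕ → ℕ) (hD : ∀ i ℓ, i < n → ℓ < m → D i ℓ = π.dmat i ℓ) :
    ∀ i ℓ, apat π i ℓ = Ainv n m D i ℓ := by
  apply Ainv_unique n m D (apat π)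
  · intro i ℓ h
    by_cases hi : i < n
    · exact apat_zero_entries he (by omega) i
    · exact apat_zero_rows' hr (by omega) ℓ
  · intro i ℓ hi hl
    rw [hD i ℓ hi hl]
    exact apat_rec π i ℓ

end PhiAux

/-- The map `Φ` sending a plane partition with at most `n` rows and
entries at most `m` to the `n × m` matrix of descent-level-set counts is a bijection
onto `n × m` matrices of nonnegative integers. -/
theorem phi_bijective (n m : ℕ) :
    Function.Bijective
      (fun π : {π : PlanePartition // π.RowsLE n ∧ π.EntriesLE m} =>
        Matrix.of (fun (i : Fin n) (ℓ : Fin m) => π.1.dmat i ℓ)) := by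
  open PhiAux in
  constructor
  · -- injectivity
    rintro ⟨π, hrπ, heπ⟩ ⟨π', hrπ', heπ'⟩ h
    simp only [Subtype.mk.injEq] at h ⊢
    have hpt : ∀ (i : Fin n) (ℓ : Fin m), π.dmat i ℓ = π'.dmat i ℓ := by
      intro i ℓ
      have := congrFun (congrFun h i) ℓ
      simpa using this
    have hA : ∀ i ℓ, apat π i ℓ = apat π' i ℓ := by
      have h1 := apat_eq_Ainv hrπ heπ (fun i ℓ => if h : i < n ∧ ℓ < m then π.dmat i ℓ else 0)
        (fun i ℓ hi hl => by simp [hi, hl])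
      have h2 := apat_eq_Ainv hrπ' heπ' (fun i ℓ => if h : i < n ∧ ℓ < m then π.dmat i ℓ else 0)
        (fun i ℓ hi hl => by
          simp only [hi, hl, and_self, dif_pos]
          exact hpt ⟨i, hi⟩ ⟨ℓ, hl⟩)
      intro i ℓ
      rw [h1 i ℓ, h2 i ℓ]
    apply ppext
    funext i j
    rw [entry_eq_card π heπ i j, entry_eq_card π' heπ' i j]
    congr 1
    apply Finset.filter_congr
    intro ℓ _
    rw [hA i ℓ]
  · -- surjectivity
    intro M
    refine ⟨⟨Psi n m (Dext n m M), Psi_rows n m _, Psi_entries n m _⟩, ?_⟩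
    ext i ℓ
    simp only [Matrix.of_apply]
    have hi : (i : ℕ) < n := i.isLt
    have hl : (ℓ : ℕ) < m := ℓ.isLt
    rw [dmat_eq, apat_Psi, apat_Psi, apat_Psi]
    have hrec := Ainv_eq n m (Dext n m M) i ℓ
    rw [if_pos ⟨hi, hl⟩] at hrec
    have hDv : Dext n m M i ℓ = M i ℓ := by
      simp only [Dext, hi, hl, and_self, dif_pos, Fin.eta]
    omega
end

section
/- For any plane partition π with at most n rows and entries at most m, and its descent set Des(π) = {(i,j) : π_{ij} > π_{i+1,j}}, summing the monomials ∏_{(i,j)∈Des(π)} x_i z_{π_{ij}} over all such plane partitions yields the product ∏_{i=1}^{n} ∏_{ℓ=1}^{m} 1/(1 − x_i z_ℓ) as formal power series. -/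
open scoped BigOperators

/-! Expanding each factor geometrically, the coefficient of `∏ x_i ^ a_i ∏ z_ℓ ^ b_ℓ` in
`∏ (1 - x_i z_ℓ)⁻¹` is the number of `ℕ`-matrices with row sums `a` and column sums `b`. So it
suffices that `π ↦ (dmat π i ℓ)` is a bijection from plane partitions with at most `n` rows and
entries at most `m` onto `n × m` matrices over `ℕ`. The numbers
`rowLenGT π i ℓ = #{j | ℓ < π i j}` determine `π` (rows are weakly decreasing) and satisfy
`rowLenGT i ℓ = max (rowLenGT i (ℓ + 1)) (rowLenGT (i + 1) ℓ) + dmat i ℓ`, since the cells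
counted by `dmat i ℓ` form an interval of columns. This recursion, started from the boundary
`i = n` or `ℓ = m` where the counts vanish, rebuilds `π` from an arbitrary matrix. -/

theorem exists_nsmul_eq_iff_le_and_exists_nsmul_eq_tsub {M : Type*} [AddCommMonoid M]
    [PartialOrder M] [CanonicallyOrderedAdd M] [Sub M] [OrderedSub M] [AddLeftReflectLE M]
    (u : M) {d : M} (hd : d ≠ 0) :
    (∃ r : ℕ, r • u = d) ↔ u ≤ d ∧ ∃ r : ℕ, r • u = d - u := by
  constructor
  · rintro ⟨_ | r, rfl⟩
    · exact absurd (zero_nsmul u) hd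
    · exact ⟨by simp [succ_nsmul], r, by simp [succ_nsmul]⟩
  · rintro ⟨hle, r, hr⟩
    exact ⟨r + 1, by rw [succ_nsmul, hr, tsub_add_cancel_of_le hle]⟩

theorem Finsupp.nsmul_left_injective {σ : Type*} {u : σ →₀ ℕ} (hu : u ≠ 0) :
    Function.Injective (· • u : ℕ → σ →₀ ℕ) := by
  obtain ⟨a, ha⟩ := Finsupp.ne_iff.mp hu
  intro r s h
  have h' : r * u a = s * u a := by simpa using DFunLike.congr_fun h a
  exact Nat.eq_of_mul_eq_mul_right (Nat.pos_of_ne_zero ha) h'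

theorem Finsupp.sum_smul_single_inl_add_single_inr_eq_iff {ι κ : Type*} [Fintype ι] [Fintype κ]
    (c : ι × κ → ℕ) (e : ι ⊕ κ →₀ ℕ) :
    ∑ p, c p • (single (Sum.inl p.1) 1 + single (Sum.inr p.2) 1) = e ↔
      (∀ i, e (Sum.inl i) = ∑ ℓ, c (i, ℓ)) ∧ (∀ ℓ, e (Sum.inr ℓ) = ∑ i, c (i, ℓ)) := by
  classical
  simp [Finsupp.ext_iff, Sum.forall, Finsupp.finsetSum_apply, Finsupp.single_apply,
    Fintype.sum_prod_type, eq_comm]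

namespace MvPowerSeries

variable {σ K : Type*} [Field K]

open Classical in
theorem coeff_inv_one_sub_monomial {u : σ →₀ ℕ} (hu : u ≠ 0) (d : σ →₀ ℕ) :
    coeff d (1 - monomial u (1 : K))⁻¹ = if ∃ r : ℕ, r • u = d then 1 else 0 := by
  set g : MvPowerSeries σ K := fun d => if ∃ r : ℕ, r • u = d then 1 else 0
  suffices (1 - monomial u (1 : K))⁻¹ = g by rw [this]; rfl
  have hconst : constantCoeff (1 - monomial u (1 : K)) ≠ 0 := by
    rw [← coeff_zero_eq_constantCoeff_apply, map_sub, coeff_one, coeff_monomial,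
      if_neg hu.symm]
    simp
  rw [MvPowerSeries.inv_eq_iff_mul_eq_one hconst]
  ext d
  rw [mul_sub, mul_one, map_sub, coeff_mul_monomial, coeff_one, mul_one]
  change ((if ∃ r : ℕ, r • u = d then 1 else 0) - if u ≤ d then
    (if ∃ r : ℕ, r • u = d - u then 1 else 0) else 0 : K) = if d = 0 then 1 else 0
  by_cases hd : d = 0
  · subst hd
    simp [hu]
  · rw [exists_nsmul_eq_iff_le_and_exists_nsmul_eq_tsub u hd]
    split_ifs <;> simp_all

theorem coeff_prod_inv_one_sub_monomial {ι : Type*} [Fintype ι]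
    {u : ι → σ →₀ ℕ} (hu : ∀ p, u p ≠ 0) (e : σ →₀ ℕ) :
    coeff e (∏ p, (1 - monomial (u p) (1 : K))⁻¹) =
      (Nat.card {c : ι → ℕ // ∑ p, c p • u p = e} : K) := by
  classical
  simp only [coeff_prod, coeff_inv_one_sub_monomial (hu _), Finset.prod_boole,
    Finset.sum_boole, Finset.mem_univ, true_implies]
  rw [← Nat.card_eq_finsetCard]
  congr 1
  symm
  refine Nat.card_congr (Equiv.ofBijective
    (fun c => ⟨Finsupp.equivFunOnFinite.symm fun p => c.1 p • u p, ?_⟩) ⟨?_, ?_⟩)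
  · simp [Finset.mem_finsuppAntidiag, ← c.2]
  · intro c c' h
    ext p
    exact Finsupp.nsmul_left_injective (hu p) (DFunLike.congr_fun (congrArg Subtype.val h) p)
  · rintro ⟨l, hl⟩
    simp only [Finset.mem_filter, Finset.mem_finsuppAntidiag] at hl
    choose c hc using hl.2
    refine ⟨⟨c, by simp [hc, ← hl.1.1]⟩, ?_⟩
    ext1
    ext1 p
    simp [hc]

end MvPowerSeries

theorem IsLowerSet.eq_Iio_ncard {S : Set ℕ} (hl : IsLowerSet S) (hS : S.Finite) :
    S = Set.Iio S.ncard := by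
  obtain hU | ⟨a, rfl⟩ := hl.eq_univ_or_Iio
  · exact absurd (hU ▸ hS) Set.infinite_univ
  · rw [Set.ncard_Iio_nat]

theorem IsLowerSet.lt_ncard_iff {S : Set ℕ} (hl : IsLowerSet S) (hS : S.Finite) {a : ℕ} :
    a < S.ncard ↔ a ∈ S := by
  conv_rhs => rw [hl.eq_Iio_ncard hS]
  rfl

namespace PlanePartition

section RowLenGT

variable (π : PlanePartition)

noncomputable def rowLenGT (i ℓ : ℕ) : ℕ := {j | ℓ < π.entry i j}.ncard

theorem lt_rowLenGT_iff {i ℓ j : ℕ} : j < π.rowLenGT i ℓ ↔ ℓ < π.entry i j := by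
  refine IsLowerSet.lt_ncard_iff (fun _ _ hba ha => ?_) ?_
  · exact lt_of_lt_of_le ha (antitone_nat_of_succ_le (π.row_decr i) hba)
  · exact (π.finite_support.preimage (Prod.mk_right_injective i).injOn).subset
      fun _ hj => Nat.ne_zero_of_lt (show ℓ < _ from hj)

theorem rowLenGT_succ_le (i ℓ : ℕ) : π.rowLenGT i (ℓ + 1) ≤ π.rowLenGT i ℓ :=
  le_of_forall_lt fun _ hj => π.lt_rowLenGT_iff.2 (Nat.lt_of_succ_lt (π.lt_rowLenGT_iff.1 hj))

theorem rowLenGT_succ_le_left (i ℓ : ℕ) : π.rowLenGT (i + 1) ℓ ≤ π.rowLenGT i ℓ :=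
  le_of_forall_lt fun j hj =>
    π.lt_rowLenGT_iff.2 (lt_of_lt_of_le (π.lt_rowLenGT_iff.1 hj) (π.col_decr i j))

theorem rowLenGT_eq_max_add_dmat (i ℓ : ℕ) :
    π.rowLenGT i ℓ = max (π.rowLenGT i (ℓ + 1)) (π.rowLenGT (i + 1) ℓ) + π.dmat i ℓ := by
  have hIco : {j | π.entry i j = ℓ + 1 ∧ π.entry (i + 1) j ≤ ℓ} =
      Set.Ico (max (π.rowLenGT i (ℓ + 1)) (π.rowLenGT (i + 1) ℓ)) (π.rowLenGT i ℓ) := by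
    ext j
    have h₀ := π.lt_rowLenGT_iff (i := i) (ℓ := ℓ) (j := j)
    have h₁ := π.lt_rowLenGT_iff (i := i) (ℓ := ℓ + 1) (j := j)
    have h₂ := π.lt_rowLenGT_iff (i := i + 1) (ℓ := ℓ) (j := j)
    simp only [Set.mem_ofPred_eq, Set.mem_Ico, max_le_iff]
    omega
  have hmax := max_le (π.rowLenGT_succ_le i ℓ) (π.rowLenGT_succ_le_left i ℓ)
  rw [dmat, hIco, ← Finset.coe_Ico, Set.ncard_coe_finset, Nat.card_Ico]
  omega

theorem rowLenGT_eq_zero_of_rowsLE {n : ℕ} (h : π.RowsLE n) {i : ℕ} (hi : n ≤ i) (ℓ : ℕ) :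
    π.rowLenGT i ℓ = 0 :=
  Nat.eq_zero_of_not_pos fun hpos => by simpa [h i 0 hi] using π.lt_rowLenGT_iff.1 hpos

theorem rowLenGT_eq_zero_of_entriesLE {m : ℕ} (h : π.EntriesLE m) (i : ℕ) {ℓ : ℕ} (hℓ : m ≤ ℓ) :
    π.rowLenGT i ℓ = 0 :=
  Nat.eq_zero_of_not_pos fun hpos => by have := π.lt_rowLenGT_iff.1 hpos; have := h i 0; omega

theorem ext_of_rowLenGT {π π' : PlanePartition} (h : π.rowLenGT = π'.rowLenGT) : π = π' := by
  have hentry : π.entry = π'.entry := by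
    funext i j
    exact eq_of_forall_lt_iff fun ℓ => by rw [← lt_rowLenGT_iff, ← lt_rowLenGT_iff, h]
  cases π; cases π'; cases hentry; rfl

end RowLenGT

section OfMatrix

variable {n m : ℕ} (k : Fin n × Fin m → ℕ)

def rowLenGTOf (i ℓ : ℕ) : ℕ :=
  if h : i < n ∧ ℓ < m then
    max (rowLenGTOf i (ℓ + 1)) (rowLenGTOf (i + 1) ℓ) + k (⟨i, h.1⟩, ⟨ℓ, h.2⟩)
  else 0
termination_by (n - i, m - ℓ)

theorem rowLenGTOf_of_lt {i ℓ : ℕ} (h : i < n ∧ ℓ < m) :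
    rowLenGTOf k i ℓ =
      max (rowLenGTOf k i (ℓ + 1)) (rowLenGTOf k (i + 1) ℓ) + k (⟨i, h.1⟩, ⟨ℓ, h.2⟩) := by
  rw [rowLenGTOf, dif_pos h]

theorem rowLenGTOf_eq_zero {i ℓ : ℕ} (h : ¬(i < n ∧ ℓ < m)) : rowLenGTOf k i ℓ = 0 := by
  rw [rowLenGTOf, dif_neg h]

theorem rowLenGTOf_succ_le (i ℓ : ℕ) : rowLenGTOf k i (ℓ + 1) ≤ rowLenGTOf k i ℓ := by
  by_cases h : i < n ∧ ℓ < m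
  · rw [rowLenGTOf_of_lt k h]
    exact le_add_right (le_max_left _ _)
  · rw [rowLenGTOf_eq_zero k (by omega)]
    exact Nat.zero_le _

theorem rowLenGTOf_succ_le_left (i ℓ : ℕ) : rowLenGTOf k (i + 1) ℓ ≤ rowLenGTOf k i ℓ := by
  by_cases h : i < n ∧ ℓ < m
  · rw [rowLenGTOf_of_lt k h]
    exact le_add_right (le_max_right _ _)
  · rw [rowLenGTOf_eq_zero k (by omega)]
    exact Nat.zero_le _

theorem rowLenGTOf_anti {i i' ℓ ℓ' : ℕ} (hi : i ≤ i') (hℓ : ℓ ≤ ℓ') :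
    rowLenGTOf k i' ℓ' ≤ rowLenGTOf k i ℓ :=
  (antitone_nat_of_succ_le (rowLenGTOf_succ_le k i') hℓ).trans
    (antitone_nat_of_succ_le (f := (rowLenGTOf k · ℓ)) (rowLenGTOf_succ_le_left k · ℓ) hi)

theorem isLowerSet_setOf_lt_rowLenGTOf (i j : ℕ) : IsLowerSet {ℓ | j < rowLenGTOf k i ℓ} :=
  fun _ _ hba ha => lt_of_lt_of_le ha (rowLenGTOf_anti k le_rfl hba)

theorem lt_and_lt_of_lt_rowLenGTOf {i j ℓ : ℕ} (h : j < rowLenGTOf k i ℓ) : i < n ∧ ℓ < m := by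
  by_contra hout
  rw [rowLenGTOf_eq_zero k hout] at h
  exact Nat.not_lt_zero _ h

theorem setOf_lt_rowLenGTOf_subset_Iio (i j : ℕ) : {ℓ | j < rowLenGTOf k i ℓ} ⊆ Set.Iio m :=
  fun _ hℓ => (lt_and_lt_of_lt_rowLenGTOf k hℓ).2

noncomputable def ofMatrix : PlanePartition where
  entry i j := {ℓ | j < rowLenGTOf k i ℓ}.ncard
  row_decr i j := Set.ncard_le_ncard (fun _ => Nat.lt_of_succ_lt)
    ((Set.finite_Iio m).subset (setOf_lt_rowLenGTOf_subset_Iio k i j))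
  col_decr i j := Set.ncard_le_ncard (fun ℓ h => lt_of_lt_of_le h (rowLenGTOf_succ_le_left k i ℓ))
    ((Set.finite_Iio m).subset (setOf_lt_rowLenGTOf_subset_Iio k i j))
  finite_support := by
    refine ((Set.finite_Iio n).prod (Set.finite_Iio (rowLenGTOf k 0 0))).subset fun ⟨i, j⟩ h => ?_
    obtain ⟨ℓ, hℓ : j < rowLenGTOf k i ℓ⟩ := Set.nonempty_of_ncard_ne_zero h
    exact ⟨(lt_and_lt_of_lt_rowLenGTOf k hℓ).1,
      lt_of_lt_of_le hℓ (rowLenGTOf_anti k (Nat.zero_le i) (Nat.zero_le ℓ))⟩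

theorem lt_ofMatrix_entry_iff {i j ℓ : ℕ} : ℓ < (ofMatrix k).entry i j ↔ j < rowLenGTOf k i ℓ :=
  (isLowerSet_setOf_lt_rowLenGTOf k i j).lt_ncard_iff
    ((Set.finite_Iio m).subset (setOf_lt_rowLenGTOf_subset_Iio k i j))

theorem rowLenGT_ofMatrix : (ofMatrix k).rowLenGT = rowLenGTOf k := by
  funext i ℓ
  exact eq_of_forall_lt_iff fun j => by rw [lt_rowLenGT_iff, lt_ofMatrix_entry_iff]

theorem dmat_ofMatrix (p : Fin n × Fin m) : (ofMatrix k).dmat p.1 p.2 = k p := by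
  have h := (ofMatrix k).rowLenGT_eq_max_add_dmat p.1 p.2
  rw [rowLenGT_ofMatrix, rowLenGTOf_of_lt k ⟨p.1.2, p.2.2⟩] at h
  exact (Nat.add_left_cancel h).symm

theorem ofMatrix_rowsLE : (ofMatrix k).RowsLE n := fun _ _ hi =>
  Nat.eq_zero_of_not_pos fun hpos =>
    absurd (lt_and_lt_of_lt_rowLenGTOf k ((lt_ofMatrix_entry_iff k).1 hpos)).1 (not_lt.2 hi)

theorem ofMatrix_entriesLE : (ofMatrix k).EntriesLE m := fun i j =>
  (Set.ncard_le_ncard (setOf_lt_rowLenGTOf_subset_Iio k i j) (Set.finite_Iio m)).trans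
    (Set.ncard_Iio_nat m).le

end OfMatrix

variable {π : PlanePartition} {n m : ℕ}

theorem rowLenGTOf_dmat (hR : π.RowsLE n) (hE : π.EntriesLE m) :
    rowLenGTOf (fun p : Fin n × Fin m => π.dmat p.1 p.2) = π.rowLenGT := by
  funext i ℓ
  induction i, ℓ using rowLenGTOf.induct (n := n) (m := m) with
  | case1 i ℓ h ih₁ ih₂ =>
    rw [rowLenGTOf_of_lt _ h, ih₁, ih₂, ← rowLenGT_eq_max_add_dmat]
  | case2 i ℓ h =>
    rw [rowLenGTOf_eq_zero _ h]
    rcases not_and_or.1 h with hi | hℓ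
    · exact (π.rowLenGT_eq_zero_of_rowsLE hR (not_lt.1 hi) ℓ).symm
    · exact (π.rowLenGT_eq_zero_of_entriesLE hE i (not_lt.1 hℓ)).symm

theorem ofMatrix_dmat (hR : π.RowsLE n) (hE : π.EntriesLE m) :
    ofMatrix (fun p : Fin n × Fin m => π.dmat p.1 p.2) = π :=
  ext_of_rowLenGT (by rw [rowLenGT_ofMatrix, rowLenGTOf_dmat hR hE])

noncomputable def boundedEquivMatrix (n m : ℕ) :
    {π : PlanePartition // π.RowsLE n ∧ π.EntriesLE m} ≃ (Fin n × Fin m → ℕ) where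
  toFun π p := π.1.dmat p.1 p.2
  invFun k := ⟨ofMatrix k, ofMatrix_rowsLE k, ofMatrix_entriesLE k⟩
  left_inv π := Subtype.ext (ofMatrix_dmat π.2.1 π.2.2)
  right_inv k := funext (dmat_ofMatrix k)

theorem card_bounded_eq_card_matrix (n m : ℕ) (e : Fin n ⊕ Fin m →₀ ℕ) :
    Nat.card {π : PlanePartition // π.RowsLE n ∧ π.EntriesLE m ∧
      (∀ i : Fin n, e (Sum.inl i) = ∑ ℓ : Fin m, π.dmat i ℓ) ∧
      (∀ ℓ : Fin m, e (Sum.inr ℓ) = ∑ i : Fin n, π.dmat i ℓ)} =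
    Nat.card {c : Fin n × Fin m → ℕ //
      ∑ p, c p • (Finsupp.single (Sum.inl p.1) 1 + Finsupp.single (Sum.inr p.2) 1) = e} :=
  Nat.card_congr <| (Equiv.subtypeEquivRight fun _ => and_assoc.symm).trans <|
    (Equiv.subtypeSubtypeEquivSubtypeInter _ _).symm.trans <|
      Equiv.subtypeEquiv (boundedEquivMatrix n m) fun π =>
        (Finsupp.sum_smul_single_inl_add_single_inr_eq_iff (boundedEquivMatrix n m π) e).symm

end PlanePartition

open MvPowerSeries in
/-- The descent monomial `∏_{(i,j) ∈ Des(π)} x_i z_{π_{ij}}` has exponents the row sums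
`∑ ℓ, dmat π i ℓ` and the column (value) sums `∑ i, dmat π i ℓ`, so the identity is stated
coefficient by coefficient. -/
theorem multivariate_identity (n m : ℕ) (e : (Fin n ⊕ Fin m) →₀ ℕ) :
    MvPowerSeries.coeff e
      (∏ i : Fin n, ∏ ℓ : Fin m,
        (1 - MvPowerSeries.X (Sum.inl i) * MvPowerSeries.X (Sum.inr ℓ) :
          MvPowerSeries (Fin n ⊕ Fin m) ℚ)⁻¹) =
    Nat.card {π : PlanePartition // π.RowsLE n ∧ π.EntriesLE m ∧
      (∀ i : Fin n, e (Sum.inl i) = ∑ ℓ : Fin m, π.dmat i ℓ) ∧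
      (∀ ℓ : Fin m, e (Sum.inr ℓ) = ∑ i : Fin n, π.dmat i ℓ)} := by
  rw [PlanePartition.card_bounded_eq_card_matrix,
    ← coeff_prod_inv_one_sub_monomial fun _ => by simp, Fintype.prod_prod_type]
  simp only [X_def, monomial_mul_monomial, mul_one]
end

section
/- The pair statistics (des(π), |π|_{uh}) and (tr(π), |π|) are equidistributed over all plane partitions: Σ_π t^{des(π)} q^{|π|_{uh}} = ∏_{k≥1} (1 − t q^k)^{−k} = Σ_π t^{tr(π)} q^{|π|}. -/
open scoped BigOperators

/-!
Both pairs of statistics are carried by bijections to the pair (total weight, weight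
`(x, y) ↦ x + y + 1`) of finitely supported matrices `m : ℕ × ℕ →₀ ℕ`.

For `(des, |·|_{uh})`, conjugate every row of `π`. In the resulting plane partition `τ`, the excess
of `τ_{iℓ}` over `max τ_{i,ℓ+1} τ_{i+1,ℓ}` counts the descents of `π` in row `i` of value `ℓ + 1`,
each contributing `i + ℓ + 1` to `|π|_{uh}`; and `τ` is recovered from its excesses as the
last-passage times of the excess matrix.

For `(tr, |·|)`, the diagonals of `π` form the boundary of a growth diagram whose edges are
horizontal strips; the RSK local rule fills it in, and the weight of a cell is what the first part
gains across it. Each cell adds its weight to the sizes, so the partition at `(x, y)` has the size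
of the weight south-east of `(x, y)`. The main diagonal therefore has size the total weight, and
summing over all diagonals counts `m (x, y)` once for each of the `x + y + 1` boundary points
`(0, d)`, `(d, 0)` north-west of `(x, y)`.
-/

open Finset

namespace PlanePartition

@[ext]
theorem ext {π σ : PlanePartition} (h : π.entry = σ.entry) : π = σ := by
  cases π; cases σ; congr

theorem antitone_entry_row (π : PlanePartition) (i : ℕ) : Antitone (π.entry i) :=
  antitone_nat_of_succ_le (π.row_decr i)

theorem antitone_entry_col (π : PlanePartition) (j : ℕ) : Antitone (π.entry · j) :=
  antitone_nat_of_succ_le (π.col_decr · j)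

theorem entry_le_entry_zero_zero (π : PlanePartition) (i j : ℕ) : π.entry i j ≤ π.entry 0 0 :=
  (π.antitone_entry_row i (Nat.zero_le j)).trans (π.antitone_entry_col 0 (Nat.zero_le i))

theorem exists_entry_eq_zero_of_le (π : PlanePartition) :
    ∃ N, ∀ i j, N ≤ i ∨ N ≤ j → π.entry i j = 0 := by
  obtain ⟨M, hM⟩ := (π.finite_support.image fun p => max p.1 p.2).bddAbove
  refine ⟨M + 1, fun i j hij => by_contra fun h => ?_⟩
  have := hM ⟨(i, j), h, rfl⟩
  simp only [sup_le_iff] at this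
  omega

def ofBox (f : ℕ → ℕ → ℕ) (hrow : ∀ i j, f i (j + 1) ≤ f i j) (hcol : ∀ i j, f (i + 1) j ≤ f i j)
    (N : ℕ) (hN : ∀ i j, N ≤ i ∨ N ≤ j → f i j = 0) : PlanePartition where
  entry := f
  row_decr := hrow
  col_decr := hcol
  finite_support := ((Set.finite_Iio N).prod (Set.finite_Iio N)).subset fun p hp => by
    simp only [Set.mem_prod, Set.mem_Iio]
    by_contra h
    exact hp (hN _ _ (by omega))

section RowConj

variable (π : PlanePartition)

theorem exists_entry_le (i v : ℕ) : ∃ j, π.entry i j ≤ v :=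
  let ⟨N, hN⟩ := π.exists_entry_eq_zero_of_le
  ⟨N, (hN i N (Or.inr le_rfl)).trans_le (Nat.zero_le v)⟩

/-- The number of entries of row `i` exceeding `v`, so that row `i` of `rowConj π` is the
conjugate of row `i` of `π`. -/
def rowConjEntry (i v : ℕ) : ℕ := Nat.find (π.exists_entry_le i v)

variable {π}

theorem lt_rowConjEntry_iff {i v j : ℕ} : j < π.rowConjEntry i v ↔ v < π.entry i j := by
  rw [rowConjEntry, Nat.lt_find_iff]
  exact ⟨fun h => not_le.1 (h j le_rfl),
    fun h k hk => not_le.2 (h.trans_le (π.antitone_entry_row i hk))⟩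

theorem rowConjEntry_mono_iff {i i' v v' : ℕ} :
    π.rowConjEntry i' v' ≤ π.rowConjEntry i v ↔ ∀ j, v' < π.entry i' j → v < π.entry i j := by
  refine ⟨fun h j hj => lt_rowConjEntry_iff.1 ((lt_rowConjEntry_iff.2 hj).trans_le h),
    fun h => le_of_forall_lt fun j hj => ?_⟩
  exact lt_rowConjEntry_iff.2 (h j (lt_rowConjEntry_iff.1 hj))

variable (π)

noncomputable def rowConj : PlanePartition :=
  ofBox π.rowConjEntry
    (fun _ _ => rowConjEntry_mono_iff.2 fun _ => Nat.lt_of_succ_lt)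
    (fun i _ => rowConjEntry_mono_iff.2 fun j h => h.trans_le (π.col_decr i j))
    (π.exists_entry_eq_zero_of_le.choose + π.entry 0 0) fun i v h =>
      Nat.eq_zero_of_not_pos fun hpos => by
        have h0 := lt_rowConjEntry_iff.1 hpos
        have := π.entry_le_entry_zero_zero i 0
        have := π.exists_entry_eq_zero_of_le.choose_spec i 0
        omega

@[simp]
theorem rowConj_entry : π.rowConj.entry = π.rowConjEntry := rfl

theorem rowConj_involutive : Function.Involutive rowConj := fun π =>
  ext <| funext₂ fun i j => eq_of_forall_lt_iff fun v => by
    rw [rowConj_entry, lt_rowConjEntry_iff, rowConj_entry, lt_rowConjEntry_iff]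

end RowConj

end PlanePartition

section Southeast

variable {α : Type*}

theorem southeast_induction (C : ℕ) {P : ℕ → ℕ → Prop} (base : ∀ x y, C ≤ x + y → P x y)
    (step : ∀ x y, P (x + 1) (y + 1) → P (x + 1) y → P x (y + 1) → P x y) :
    ∀ x y, P x y := by
  suffices h : ∀ n x y, C ≤ n + x + y → P x y from fun x y => h C x y (by omega)
  intro n
  induction n with
  | zero => exact fun x y h => base x y (by omega)
  | succ n ih =>
    intro x y h
    by_cases hC : C ≤ x + y
    · exact base x y hC
    · exact step x y (ih _ _ (by omega)) (ih _ _ (by omega)) (ih _ _ (by omega))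

def southeastFuel (F : ℕ → ℕ → α → α → α → α) (z : α) : ℕ → ℕ → ℕ → α
  | 0, _, _ => z
  | f + 1, x, y => F x y (southeastFuel F z f (x + 1) (y + 1)) (southeastFuel F z f (x + 1) y)
      (southeastFuel F z f x (y + 1))

variable {F : ℕ → ℕ → α → α → α → α} {z : α} {B : ℕ}

theorem southeastFuel_of_le (hF : ∀ x y, B ≤ x ∨ B ≤ y → F x y z z z = z) :
    ∀ f x y, B ≤ x ∨ B ≤ y → southeastFuel F z f x y = z
  | 0, _, _, _ => rfl
  | f + 1, x, y, h => by
    rw [southeastFuel, southeastFuel_of_le hF f _ _ (by omega),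
      southeastFuel_of_le hF f _ _ (by omega), southeastFuel_of_le hF f _ _ (by omega), hF x y h]

theorem southeastFuel_succ (hF : ∀ x y, B ≤ x ∨ B ≤ y → F x y z z z = z) :
    ∀ f x y, 2 * B ≤ f + x + y → southeastFuel F z (f + 1) x y = southeastFuel F z f x y
  | 0, x, y, h => by
    rw [southeastFuel_of_le hF 1 x y (by omega), southeastFuel_of_le hF 0 x y (by omega)]
  | f + 1, x, y, h => by
    rw [southeastFuel, southeastFuel_succ hF f _ _ (by omega),
      southeastFuel_succ hF f _ _ (by omega), southeastFuel_succ hF f _ _ (by omega),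
      southeastFuel]

variable (F z B) in
/-- Fuel `2 * B` suffices: a point depends only on the points of the box `[0, B) × [0, B)`
south-east of it. -/
def southeastSolution (x y : ℕ) : α := southeastFuel F z (2 * B) x y

theorem southeastSolution_eq (hF : ∀ x y, B ≤ x ∨ B ≤ y → F x y z z z = z) (x y : ℕ) :
    southeastSolution F z B x y = F x y (southeastSolution F z B (x + 1) (y + 1))
      (southeastSolution F z B (x + 1) y) (southeastSolution F z B x (y + 1)) := by
  rw [southeastSolution, ← southeastFuel_succ hF _ _ _ (by omega)]
  rfl

theorem southeastSolution_of_le (hF : ∀ x y, B ≤ x ∨ B ≤ y → F x y z z z = z) {x y : ℕ}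
    (h : B ≤ x ∨ B ≤ y) : southeastSolution F z B x y = z :=
  southeastFuel_of_le hF _ x y h

theorem eq_southeastSolution (hF : ∀ x y, B ≤ x ∨ B ≤ y → F x y z z z = z) {P : ℕ → ℕ → α}
    (hP : ∀ x y, P x y = F x y (P (x + 1) (y + 1)) (P (x + 1) y) (P x (y + 1)))
    {C : ℕ} (hC : ∀ x y, C ≤ x ∨ C ≤ y → P x y = z) : P = southeastSolution F z B := by
  funext x y
  refine southeast_induction (P := fun x y => P x y = southeastSolution F z B x y) (2 * (B + C))
    (fun x y h => ?_) (fun x y h₁ h₂ h₃ => ?_) x y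
  · rw [hC x y (by omega), southeastSolution_of_le hF (by omega)]
  · rw [hP, southeastSolution_eq hF, h₁, h₂, h₃]

end Southeast

def boxBound {M : Type*} [Zero M] (m : (ℕ × ℕ) →₀ M) : ℕ :=
  m.support.sup (fun p => max p.1 p.2) + 1

theorem lt_boxBound_of_mem_support {M : Type*} [Zero M] {m : (ℕ × ℕ) →₀ M} {p : ℕ × ℕ}
    (hp : p ∈ m.support) : p.1 < boxBound m ∧ p.2 < boxBound m := by
  have := Finset.le_sup (f := fun p : ℕ × ℕ => max p.1 p.2) hp
  simp only [sup_le_iff] at this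
  unfold boxBound
  omega

theorem apply_eq_zero_of_boxBound_le {M : Type*} [Zero M] {m : (ℕ × ℕ) →₀ M} {x y : ℕ}
    (h : boxBound m ≤ x ∨ boxBound m ≤ y) : m (x, y) = 0 := by
  by_contra hxy
  have := lt_boxBound_of_mem_support (Finsupp.mem_support_iff.2 hxy)
  omega

namespace PlanePartition

noncomputable def excess (τ : PlanePartition) : (ℕ × ℕ) →₀ ℕ :=
  Finsupp.ofSupportFinite
    (fun p => τ.entry p.1 p.2 - max (τ.entry p.1 (p.2 + 1)) (τ.entry (p.1 + 1) p.2))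
    (τ.finite_support.subset fun p hp => by
      simp only [Function.mem_support, ne_eq, Set.mem_ofPred_eq] at hp ⊢
      omega)

theorem excess_apply (τ : PlanePartition) (i v : ℕ) :
    τ.excess (i, v) = τ.entry i v - max (τ.entry i (v + 1)) (τ.entry (i + 1) v) := rfl

theorem entry_eq_excess_add_max (τ : PlanePartition) (i v : ℕ) :
    τ.entry i v = τ.excess (i, v) + max (τ.entry i (v + 1)) (τ.entry (i + 1) v) := by
  have := τ.row_decr i v
  have := τ.col_decr i v
  rw [excess_apply]
  omega

end PlanePartition

noncomputable def lastPassage (m : (ℕ × ℕ) →₀ ℕ) : ℕ → ℕ → ℕ :=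
  southeastSolution (fun x y _ below right => m (x, y) + max right below) 0 (boxBound m)

theorem lastPassage_boundary (m : (ℕ × ℕ) →₀ ℕ) (x y : ℕ) (h : boxBound m ≤ x ∨ boxBound m ≤ y) :
    m (x, y) + max 0 0 = 0 := by
  rw [apply_eq_zero_of_boxBound_le h]
  rfl

theorem lastPassage_eq (m : (ℕ × ℕ) →₀ ℕ) (i v : ℕ) :
    lastPassage m i v = m (i, v) + max (lastPassage m i (v + 1)) (lastPassage m (i + 1) v) :=
  southeastSolution_eq (lastPassage_boundary m) i v

theorem eq_lastPassage {m : (ℕ × ℕ) →₀ ℕ} {P : ℕ → ℕ → ℕ}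
    (hP : ∀ i v, P i v = m (i, v) + max (P i (v + 1)) (P (i + 1) v)) {C : ℕ}
    (hC : ∀ i v, C ≤ i ∨ C ≤ v → P i v = 0) : P = lastPassage m :=
  eq_southeastSolution (lastPassage_boundary m) hP hC

noncomputable def ofExcess (m : (ℕ × ℕ) →₀ ℕ) : PlanePartition :=
  PlanePartition.ofBox (lastPassage m)
    (fun i v => by rw [lastPassage_eq m i v]; omega)
    (fun i v => by rw [lastPassage_eq m i v]; omega)
    (boxBound m) fun _ _ h => southeastSolution_of_le (lastPassage_boundary m) h

theorem excess_ofExcess (m : (ℕ × ℕ) →₀ ℕ) : (ofExcess m).excess = m := by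
  ext ⟨i, v⟩
  rw [PlanePartition.excess_apply]
  exact Nat.sub_eq_of_eq_add (lastPassage_eq m i v)

theorem ofExcess_excess (τ : PlanePartition) : ofExcess τ.excess = τ := by
  obtain ⟨C, hC⟩ := τ.exists_entry_eq_zero_of_le
  ext1
  exact (eq_lastPassage τ.entry_eq_excess_add_max hC).symm

noncomputable def excessEquiv : PlanePartition ≃ ((ℕ × ℕ) →₀ ℕ) where
  toFun := PlanePartition.excess
  invFun := ofExcess
  left_inv := ofExcess_excess
  right_inv := excess_ofExcess

namespace PlanePartition

variable (π : PlanePartition)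

theorem dmat_set_eq_Ico (i ℓ : ℕ) : {j | π.entry i j = ℓ + 1 ∧ π.entry (i + 1) j ≤ ℓ} =
    Set.Ico (max (π.rowConjEntry i (ℓ + 1)) (π.rowConjEntry (i + 1) ℓ)) (π.rowConjEntry i ℓ) := by
  ext j
  simp only [Set.mem_ofPred_eq, Set.mem_Ico, ← not_lt, lt_max_iff, lt_rowConjEntry_iff]
  omega

theorem dmat_eq_excess_rowConj (i ℓ : ℕ) : π.dmat i ℓ = π.rowConj.excess (i, ℓ) := by
  rw [dmat, dmat_set_eq_Ico, Set.ncard_Ico_nat, excess_apply, rowConj_entry]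

theorem des_finite : π.Des.Finite :=
  π.finite_support.subset fun p (hp : π.entry (p.1 + 1) p.2 < π.entry p.1 p.2) =>
    show π.entry p.1 p.2 ≠ 0 by omega

/-- A descent `(i, j)` with `π_{ij} = ℓ + 1` is counted by the excess of `rowConj π` at
`(i, ℓ)`. -/
theorem sum_des_eq_sum_excess {M : Type*} [AddCommMonoid M] (g : ℕ × ℕ → M) :
    ∑ p ∈ π.des_finite.toFinset, g (p.1, π.entry p.1 p.2 - 1) =
      π.rowConj.excess.sum fun q c => c • g q := by
  classical
  have hfiber (i ℓ : ℕ) :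
      (↑{p ∈ π.des_finite.toFinset | (p.1, π.entry p.1 p.2 - 1) = (i, ℓ)} : Set (ℕ × ℕ)) =
        Prod.mk i '' {j | π.entry i j = ℓ + 1 ∧ π.entry (i + 1) j ≤ ℓ} := by
    ext ⟨i', j⟩
    simp only [Finset.coe_filter, Set.Finite.mem_toFinset, Set.mem_ofPred_eq, Set.mem_image,
      Prod.mk.injEq, Des]
    constructor
    · rintro ⟨hdes, rfl, rfl⟩
      exact ⟨j, by omega, rfl, rfl⟩
    · rintro ⟨j, hj, rfl, rfl⟩
      omega
  have hcard (i ℓ : ℕ) :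
      #{p ∈ π.des_finite.toFinset | (p.1, π.entry p.1 p.2 - 1) = (i, ℓ)} = π.dmat i ℓ := by
    rw [← Set.ncard_coe_finset, hfiber, Set.ncard_image_of_injective _ (Prod.mk_right_injective _),
      dmat]
  have hmaps : ∀ p ∈ π.des_finite.toFinset,
      (p.1, π.entry p.1 p.2 - 1) ∈ π.rowConj.excess.support := fun p hp => by
    rw [Finsupp.mem_support_iff, ← dmat_eq_excess_rowConj, ← hcard, ← Nat.pos_iff_ne_zero,
      Finset.card_pos]
    exact ⟨p, Finset.mem_filter.2 ⟨hp, rfl⟩⟩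
  rw [← Finset.sum_fiberwise_of_maps_to' hmaps, Finsupp.sum]
  refine Finset.sum_congr rfl fun ⟨i, ℓ⟩ _ => ?_
  rw [Finset.sum_const, hcard, dmat_eq_excess_rowConj]

theorem des_eq_degree : π.des = π.rowConj.excess.degree := by
  rw [des, Set.ncard_eq_toFinset_card _ π.des_finite, Finset.card_eq_sum_ones,
    sum_des_eq_sum_excess π fun _ => 1, Finsupp.degree_apply, Finsupp.sum]
  simp only [smul_eq_mul, mul_one]

theorem uhvol_eq_weight :
    π.uhvol = Finsupp.weight (fun p : ℕ × ℕ => p.1 + p.2 + 1) π.rowConj.excess := by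
  rw [uhvol, finsum_mem_eq_finite_toFinset_sum _ π.des_finite, Finsupp.weight_apply,
    ← sum_des_eq_sum_excess]
  refine Finset.sum_congr rfl fun p hp => ?_
  have : π.entry (p.1 + 1) p.2 < π.entry p.1 p.2 := π.des_finite.mem_toFinset.1 hp
  dsimp only
  omega

end PlanePartition

noncomputable def descentEquiv : PlanePartition ≃ ((ℕ × ℕ) →₀ ℕ) :=
  PlanePartition.rowConj_involutive.toPerm.trans excessEquiv

def IsHorizontalStrip (μ ν : ℕ → ℕ) : Prop := ∀ k, μ k ≤ ν k ∧ ν (k + 1) ≤ μ k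

/-- The RSK local rule: `μ`, `l₁`, `l₂` sit at the south-east, south and east corners of a cell
of weight `c`, and the result at its north-west corner. -/
def growthRule (μ l₁ l₂ : ℕ → ℕ) (c : ℕ) : ℕ → ℕ
  | 0 => max (l₁ 0) (l₂ 0) + c
  | k + 1 => max (l₁ (k + 1)) (l₂ (k + 1)) + (min (l₁ k) (l₂ k) - μ k)

def growthRuleInv (l₁ l₂ ν : ℕ → ℕ) (k : ℕ) : ℕ :=
  min (l₁ k) (l₂ k) + max (l₁ (k + 1)) (l₂ (k + 1)) - ν (k + 1)

section GrowthRule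

variable {μ l₁ l₂ ν : ℕ → ℕ}

theorem growthRule_comm (μ l₁ l₂ : ℕ → ℕ) (c : ℕ) :
    growthRule μ l₁ l₂ c = growthRule μ l₂ l₁ c := by
  funext k
  cases k <;> simp only [growthRule, max_comm, min_comm]

theorem growthRuleInv_comm (l₁ l₂ ν : ℕ → ℕ) : growthRuleInv l₁ l₂ ν = growthRuleInv l₂ l₁ ν := by
  funext k
  simp only [growthRuleInv, max_comm, min_comm]

theorem growthRule_zero : growthRule 0 0 0 0 = 0 := by
  funext k
  cases k <;> rfl

theorem IsHorizontalStrip.growthRule_left (h₁ : IsHorizontalStrip μ l₁)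
    (h₂ : IsHorizontalStrip μ l₂) (c : ℕ) : IsHorizontalStrip l₁ (growthRule μ l₁ l₂ c) := by
  intro k
  have := h₁ k; have := h₂ k; have := h₁ (k + 1); have := h₂ (k + 1)
  cases k <;> simp only [growthRule] <;> omega

theorem IsHorizontalStrip.growthRule_right (h₁ : IsHorizontalStrip μ l₁)
    (h₂ : IsHorizontalStrip μ l₂) (c : ℕ) : IsHorizontalStrip l₂ (growthRule μ l₁ l₂ c) := by
  rw [growthRule_comm]
  exact h₂.growthRule_left h₁ c

theorem IsHorizontalStrip.growthRuleInv_left (h₁ : IsHorizontalStrip l₁ ν)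
    (h₂ : IsHorizontalStrip l₂ ν) : IsHorizontalStrip (growthRuleInv l₁ l₂ ν) l₁ := by
  intro k
  have := h₁ k; have := h₂ k; have := h₁ (k + 1); have := h₂ (k + 1)
  simp only [growthRuleInv]
  omega

theorem IsHorizontalStrip.growthRuleInv_right (h₁ : IsHorizontalStrip l₁ ν)
    (h₂ : IsHorizontalStrip l₂ ν) : IsHorizontalStrip (growthRuleInv l₁ l₂ ν) l₂ := by
  rw [growthRuleInv_comm]
  exact h₂.growthRuleInv_left h₁

theorem growthRuleInv_growthRule (h₁ : IsHorizontalStrip μ l₁) (h₂ : IsHorizontalStrip μ l₂)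
    (c : ℕ) : growthRuleInv l₁ l₂ (growthRule μ l₁ l₂ c) = μ := by
  funext k
  have := h₁ k; have := h₂ k; have := h₁ (k + 1); have := h₂ (k + 1)
  simp only [growthRuleInv, growthRule]
  omega

theorem growthRule_growthRuleInv (h₁ : IsHorizontalStrip l₁ ν) (h₂ : IsHorizontalStrip l₂ ν) :
    growthRule (growthRuleInv l₁ l₂ ν) l₁ l₂ (ν 0 - max (l₁ 0) (l₂ 0)) = ν := by
  funext k
  cases k with
  | zero =>
    have := h₁ 0; have := h₂ 0
    simp only [growthRule]
    omega
  | succ k =>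
    have := h₁ k; have := h₂ k; have := h₁ (k + 1); have := h₂ (k + 1)
    simp only [growthRule, growthRuleInv]
    omega

theorem sum_growthRule_add_sum (h₁ : IsHorizontalStrip μ l₁) (h₂ : IsHorizontalStrip μ l₂)
    (c : ℕ) {N : ℕ} (hN₁ : l₁ N = 0) (hN₂ : l₂ N = 0) :
    ∑ k ∈ range (N + 1), growthRule μ l₁ l₂ c k + ∑ k ∈ range (N + 1), μ k =
      ∑ k ∈ range (N + 1), l₁ k + ∑ k ∈ range (N + 1), l₂ k + c := by
  have hμN : μ N = 0 := by have := h₁ N; omega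
  have hstep : ∀ k ∈ range N, growthRule μ l₁ l₂ c (k + 1) + μ k =
      max (l₁ (k + 1)) (l₂ (k + 1)) + min (l₁ k) (l₂ k) := fun k _ => by
    have := h₁ k; have := h₂ k
    simp only [growthRule]
    omega
  have hmaxmin : ∀ k ∈ range (N + 1), max (l₁ k) (l₂ k) + min (l₁ k) (l₂ k) = l₁ k + l₂ k :=
    fun k _ => max_add_min _ _
  have e₁ := sum_range_succ' (growthRule μ l₁ l₂ c) N
  have e₂ := sum_range_succ μ N
  have e₃ := sum_range_succ' (fun k => max (l₁ k) (l₂ k)) N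
  have e₄ := sum_range_succ (fun k => min (l₁ k) (l₂ k)) N
  have e₅ := sum_congr rfl hstep
  have e₆ := sum_congr rfl hmaxmin
  have e₇ : growthRule μ l₁ l₂ c 0 = max (l₁ 0) (l₂ 0) + c := rfl
  simp only [sum_add_distrib] at e₅ e₆
  omega

end GrowthRule

theorem isHorizontalStrip_zero : IsHorizontalStrip 0 0 := fun _ => ⟨le_rfl, le_rfl⟩

section Growth

variable (m : (ℕ × ℕ) →₀ ℕ)

noncomputable def growth : ℕ → ℕ → ℕ → ℕ :=
  southeastSolution (fun x y diag below right => growthRule diag below right (m (x, y))) 0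
    (boxBound m)

theorem growth_boundary (x y : ℕ) (h : boxBound m ≤ x ∨ boxBound m ≤ y) :
    growthRule 0 0 0 (m (x, y)) = 0 := by
  rw [apply_eq_zero_of_boxBound_le h, growthRule_zero]

theorem growth_eq (x y : ℕ) : growth m x y =
    growthRule (growth m (x + 1) (y + 1)) (growth m (x + 1) y) (growth m x (y + 1)) (m (x, y)) :=
  southeastSolution_eq (growth_boundary m) x y

theorem growth_of_le {x y : ℕ} (h : boxBound m ≤ x ∨ boxBound m ≤ y) : growth m x y = 0 :=
  southeastSolution_of_le (growth_boundary m) h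

variable {m} in
theorem eq_growth {P : ℕ → ℕ → ℕ → ℕ}
    (hP : ∀ x y, P x y = growthRule (P (x + 1) (y + 1)) (P (x + 1) y) (P x (y + 1)) (m (x, y)))
    {C : ℕ} (hC : ∀ x y, C ≤ x ∨ C ≤ y → P x y = 0) : P = growth m :=
  eq_southeastSolution (growth_boundary m) hP hC

theorem isHorizontalStrip_growth : ∀ x y, IsHorizontalStrip (growth m (x + 1) y) (growth m x y) ∧
    IsHorizontalStrip (growth m x (y + 1)) (growth m x y) := by
  refine southeast_induction (2 * boxBound m) (fun x y h => ?_) fun x y _ h₂ h₃ => ?_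
  · rw [growth_of_le m (x := x) (by omega), growth_of_le m (x := x + 1) (by omega),
      growth_of_le m (x := x) (y := y + 1) (by omega)]
    exact ⟨isHorizontalStrip_zero, isHorizontalStrip_zero⟩
  · rw [growth_eq m x y]
    exact ⟨h₂.2.growthRule_left h₃.1 _, h₂.2.growthRule_right h₃.1 _⟩

theorem growth_apply_of_le : ∀ k x y, 2 * boxBound m ≤ x + y + k → growth m x y k = 0
  | 0, x, y, h => by rw [growth_of_le m (by omega)]; rfl
  | k + 1, x, y, h => Nat.eq_zero_of_le_zero <|
      ((isHorizontalStrip_growth m x y).1 k).2.trans_eq (growth_apply_of_le k (x + 1) y (by omega))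

def rectSum (x y : ℕ) : ℕ := ∑ p ∈ m.support with x ≤ p.1 ∧ y ≤ p.2, m p

theorem rectSum_add_rectSum (x y : ℕ) : rectSum m x y + rectSum m (x + 1) (y + 1) =
    rectSum m (x + 1) y + rectSum m x (y + 1) + m (x, y) := by
  classical
  rw [← Finsupp.sum_ite_self_eq m (x, y)]
  simp only [rectSum, sum_filter, Finsupp.sum, ← sum_add_distrib]
  refine sum_congr rfl fun ⟨a, b⟩ _ => ?_
  simp only [Prod.mk.injEq]
  split_ifs <;> omega

theorem rectSum_of_le {x y : ℕ} (h : boxBound m ≤ x ∨ boxBound m ≤ y) : rectSum m x y = 0 :=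
  sum_eq_zero fun p hp => by
    have := lt_boxBound_of_mem_support (mem_filter.1 hp).1
    have := (mem_filter.1 hp).2
    omega

theorem sum_growth_eq_rectSum :
    ∀ x y, ∑ k ∈ range (2 * boxBound m + 1), growth m x y k = rectSum m x y := by
  refine southeast_induction (2 * boxBound m) (fun x y h => ?_) fun x y h₁ h₂ h₃ => ?_
  · rw [growth_of_le m (by omega), rectSum_of_le m (by omega)]
    simp
  · have hsize := sum_growthRule_add_sum ((isHorizontalStrip_growth m (x + 1) y).2)
      ((isHorizontalStrip_growth m x (y + 1)).1) (m (x, y))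
      (growth_apply_of_le m (2 * boxBound m) (x + 1) y (by omega))
      (growth_apply_of_le m (2 * boxBound m) x (y + 1) (by omega))
    rw [← growth_eq] at hsize
    have hrect := rectSum_add_rectSum m x y
    omega

end Growth

theorem sum_range_ite_lt {M : Type*} [AddCommMonoid M] {N c : ℕ} (h : c ≤ N) (v : M) :
    ∑ d ∈ range N, (if d < c then v else 0) = c • v := by
  rw [← sum_filter, sum_const, show (range N).filter (· < c) = range c by ext; simp; omega,
    card_range]

theorem sum_filter_le_eq_sum_diagonals {M : Type*} [AddCommMonoid M] (f : ℕ → ℕ → M) {N : ℕ}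
    (hf : ∀ i j, N ≤ j → f i j = 0) :
    ∑ p ∈ range N ×ˢ range N with p.1 ≤ p.2, f p.1 p.2 =
      ∑ p ∈ range N ×ˢ range N, f p.2 (p.2 + p.1) := by
  refine sum_of_injOn (fun p => (p.2 - p.1, p.1)) ?_ ?_ ?_ ?_
  · intro p hp q hq h
    simp only [coe_filter, mem_product, mem_range, Set.mem_ofPred_eq, Prod.ext_iff] at hp hq h ⊢
    omega
  · intro p hp
    simp only [coe_filter, mem_product, mem_range, Set.mem_ofPred_eq, coe_product, coe_range,
      Set.mem_prod, Set.mem_Iio] at hp ⊢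
    omega
  · intro q hq hq'
    simp only [coe_filter, mem_product, mem_range, Set.mem_ofPred_eq, Set.mem_image,
      not_exists, not_and, Prod.ext_iff] at hq hq'
    refine hf _ _ (not_lt.1 fun h => hq' (q.2, q.2 + q.1) ?_ ?_ ?_)
    all_goals omega
  · intro p hp
    simp only [mem_filter, mem_product, mem_range] at hp
    simp only [Nat.add_sub_cancel' hp.2]

theorem sum_filter_not_le_eq_sum_diagonals {M : Type*} [AddCommMonoid M] (f : ℕ → ℕ → M)
    {N : ℕ} (hf : ∀ i j, N ≤ i → f i j = 0) :
    ∑ p ∈ range N ×ˢ range N with ¬p.1 ≤ p.2, f p.1 p.2 =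
      ∑ p ∈ range N ×ˢ range N, f (p.2 + p.1 + 1) p.2 := by
  refine sum_of_injOn (fun p => (p.1 - p.2 - 1, p.2)) ?_ ?_ ?_ ?_
  · intro p hp q hq h
    simp only [coe_filter, mem_product, mem_range, Set.mem_ofPred_eq, Prod.ext_iff] at hp hq h ⊢
    omega
  · intro p hp
    simp only [coe_filter, mem_product, mem_range, Set.mem_ofPred_eq, coe_product, coe_range,
      Set.mem_prod, Set.mem_Iio] at hp ⊢
    omega
  · intro q hq hq'
    simp only [coe_filter, mem_product, mem_range, Set.mem_ofPred_eq, Set.mem_image,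
      not_exists, not_and, Prod.ext_iff] at hq hq'
    refine hf _ _ (not_lt.1 fun h => hq' (q.2 + q.1 + 1, q.2) ?_ ?_ ?_)
    all_goals omega
  · intro p hp
    simp only [mem_filter, mem_product, mem_range] at hp
    congr
    omega

theorem sum_box_eq_sum_diagonals {M : Type*} [AddCommMonoid M] (f : ℕ → ℕ → M) {N : ℕ}
    (hf : ∀ i j, N ≤ i ∨ N ≤ j → f i j = 0) :
    ∑ p ∈ range N ×ˢ range N, f p.1 p.2 =
      ∑ p ∈ range N ×ˢ range N, (f p.2 (p.2 + p.1) + f (p.2 + p.1 + 1) p.2) := by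
  rw [sum_add_distrib, ← sum_filter_add_sum_filter_not _ fun p => p.1 ≤ p.2,
    sum_filter_le_eq_sum_diagonals f fun i j h => hf i j (Or.inr h),
    sum_filter_not_le_eq_sum_diagonals f fun i j h => hf i j (Or.inl h)]

/-- The array whose diagonal `j = i + d` is the partition `g 0 d` and whose diagonal
`i = j + d` is `g d 0`. -/
def diagonalArray (g : ℕ → ℕ → ℕ → ℕ) (i j : ℕ) : ℕ :=
  if i ≤ j then g 0 (j - i) i else g (i - j) 0 j

section DiagonalArray

variable {g : ℕ → ℕ → ℕ → ℕ}

theorem diagonalArray_add_right (g : ℕ → ℕ → ℕ → ℕ) (i d : ℕ) :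
    diagonalArray g i (i + d) = g 0 d i := by
  simp [diagonalArray]

theorem diagonalArray_add_left (g : ℕ → ℕ → ℕ → ℕ) (j d : ℕ) :
    diagonalArray g (j + d) j = g d 0 j := by
  rcases d with _ | d
  · simp [diagonalArray]
  · rw [diagonalArray, if_neg (by omega), Nat.add_sub_cancel_left]

theorem diagonalArray_row_decr (hx : ∀ x, IsHorizontalStrip (g (x + 1) 0) (g x 0))
    (hy : ∀ y, IsHorizontalStrip (g 0 (y + 1)) (g 0 y)) (i j : ℕ) :
    diagonalArray g i (j + 1) ≤ diagonalArray g i j := by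
  rcases le_or_gt i j with h | h
  · obtain ⟨d, rfl⟩ := Nat.exists_eq_add_of_le h
    rw [add_assoc, diagonalArray_add_right, diagonalArray_add_right]
    exact (hy d i).1
  · obtain ⟨d, rfl⟩ := Nat.exists_eq_add_of_lt h
    rw [show j + d + 1 = j + 1 + d by omega, diagonalArray_add_left,
      show j + 1 + d = j + (d + 1) by omega, diagonalArray_add_left]
    exact (hx d j).2

theorem diagonalArray_col_decr (hx : ∀ x, IsHorizontalStrip (g (x + 1) 0) (g x 0))
    (hy : ∀ y, IsHorizontalStrip (g 0 (y + 1)) (g 0 y)) (i j : ℕ) :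
    diagonalArray g (i + 1) j ≤ diagonalArray g i j := by
  rcases lt_or_ge i j with h | h
  · obtain ⟨d, rfl⟩ := Nat.exists_eq_add_of_lt h
    rw [show i + d + 1 = i + 1 + d by omega, diagonalArray_add_right,
      show i + 1 + d = i + (d + 1) by omega, diagonalArray_add_right]
    exact (hy d i).2
  · obtain ⟨d, rfl⟩ := Nat.exists_eq_add_of_le h
    rw [add_assoc, diagonalArray_add_left, diagonalArray_add_left]
    exact (hx d j).1

theorem diagonalArray_eq_zero {N : ℕ} (hN : ∀ x y k, N ≤ x + y + k → g x y k = 0) {i j : ℕ}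
    (h : N ≤ i ∨ N ≤ j) : diagonalArray g i j = 0 := by
  unfold diagonalArray
  split_ifs <;> exact hN _ _ _ (by omega)

end DiagonalArray

section OfGrowth

variable (m : (ℕ × ℕ) →₀ ℕ)

theorem diagonalArray_growth_eq_zero {i j : ℕ}
    (h : 2 * boxBound m + 1 ≤ i ∨ 2 * boxBound m + 1 ≤ j) : diagonalArray (growth m) i j = 0 :=
  diagonalArray_eq_zero (fun x y k hk => growth_apply_of_le m k x y (by omega)) h

noncomputable def ofGrowth : PlanePartition :=
  PlanePartition.ofBox (diagonalArray (growth m))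
    (diagonalArray_row_decr (fun x => (isHorizontalStrip_growth m x 0).1)
      fun y => (isHorizontalStrip_growth m 0 y).2)
    (diagonalArray_col_decr (fun x => (isHorizontalStrip_growth m x 0).1)
      fun y => (isHorizontalStrip_growth m 0 y).2)
    (2 * boxBound m + 1) fun _ _ => diagonalArray_growth_eq_zero m

theorem ofGrowth_entry : (ofGrowth m).entry = diagonalArray (growth m) := rfl

theorem trace_ofGrowth : (ofGrowth m).trace = m.degree := by
  have hdiag (i : ℕ) : (ofGrowth m).entry i i = growth m 0 0 i := by
    rw [ofGrowth_entry]
    simpa using diagonalArray_add_right (growth m) i 0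
  have hsupp : Function.support (growth m 0 0) ⊆ ↑(range (2 * boxBound m + 1)) := fun k hk => by
    simp only [coe_range, Set.mem_Iio]
    by_contra h
    exact hk (growth_apply_of_le m k 0 0 (by omega))
  rw [PlanePartition.trace, finsum_congr hdiag, finsum_eq_sum_of_support_subset _ hsupp,
    sum_growth_eq_rectSum, rectSum, Finsupp.degree_apply]
  simp

theorem sum_range_rectSum_zero {M : ℕ} (hM : boxBound m ≤ M) :
    ∑ d ∈ range M, rectSum m 0 d = m.sum fun p c => c * (p.2 + 1) := by
  simp only [rectSum, sum_filter, zero_le, true_and]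
  rw [sum_comm, Finsupp.sum]
  refine sum_congr rfl fun p hp => ?_
  simp only [← Nat.lt_add_one_iff]
  rw [sum_range_ite_lt (by have := lt_boxBound_of_mem_support hp; omega), smul_eq_mul, mul_comm]

theorem sum_range_rectSum_succ_zero {M : ℕ} (hM : boxBound m ≤ M) :
    ∑ d ∈ range M, rectSum m (d + 1) 0 = m.sum fun p c => c * p.1 := by
  simp only [rectSum, sum_filter, zero_le, and_true, Nat.succ_le_iff]
  rw [sum_comm, Finsupp.sum]
  refine sum_congr rfl fun p hp => ?_
  rw [sum_range_ite_lt (by have := lt_boxBound_of_mem_support hp; omega), smul_eq_mul, mul_comm]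

theorem vol_ofGrowth : (ofGrowth m).vol = Finsupp.weight (fun p : ℕ × ℕ => p.1 + p.2 + 1) m := by
  set N := 2 * boxBound m + 1
  have hsupp : (Function.support fun p : ℕ × ℕ => (ofGrowth m).entry p.1 p.2) ⊆
      ↑(range N ×ˢ range N) := fun p hp => by
    simp only [coe_product, coe_range, Set.mem_prod, Set.mem_Iio]
    by_contra h
    exact hp (diagonalArray_growth_eq_zero m (by omega))
  have hdiag (p : ℕ × ℕ) : diagonalArray (growth m) p.2 (p.2 + p.1) +
      diagonalArray (growth m) (p.2 + p.1 + 1) p.2 =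
        growth m 0 p.1 p.2 + growth m (p.1 + 1) 0 p.2 := by
    rw [diagonalArray_add_right, add_assoc, diagonalArray_add_left]
  rw [PlanePartition.vol, finsum_eq_sum_of_support_subset _ hsupp, ofGrowth_entry,
    sum_box_eq_sum_diagonals _ fun _ _ => diagonalArray_growth_eq_zero m,
    sum_congr rfl fun p _ => hdiag p, sum_add_distrib, sum_product, sum_product]
  simp only [sum_growth_eq_rectSum]
  rw [sum_range_rectSum_zero m (by omega), sum_range_rectSum_succ_zero m (by omega),
    Finsupp.weight_apply, ← Finsupp.sum_add]
  refine Finsupp.sum_congr fun p _ => ?_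
  simp only [smul_eq_mul]
  ring

end OfGrowth

namespace PlanePartition

variable (π : PlanePartition)

def growthDiagram : ℕ → ℕ → ℕ → ℕ
  | 0, y => fun k => π.entry k (k + y)
  | x + 1, 0 => fun k => π.entry (k + (x + 1)) k
  | x + 1, y + 1 => growthRuleInv (growthDiagram (x + 1) y) (growthDiagram x (y + 1))
      (growthDiagram x y)

theorem growthDiagram_zero_left (y k : ℕ) : π.growthDiagram 0 y k = π.entry k (k + y) := by
  rw [growthDiagram]

theorem growthDiagram_zero_right (x k : ℕ) : π.growthDiagram x 0 k = π.entry (k + x) k := by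
  cases x <;> simp [growthDiagram]

theorem growthDiagram_succ_succ (x y : ℕ) : π.growthDiagram (x + 1) (y + 1) =
    growthRuleInv (π.growthDiagram (x + 1) y) (π.growthDiagram x (y + 1)) (π.growthDiagram x y) := by
  rw [growthDiagram]

theorem diagonalArray_growthDiagram : diagonalArray π.growthDiagram = π.entry := by
  funext i j
  rcases le_or_gt i j with h | h
  · obtain ⟨d, rfl⟩ := Nat.exists_eq_add_of_le h
    rw [diagonalArray_add_right, growthDiagram_zero_left]
  · obtain ⟨d, rfl⟩ := Nat.exists_eq_add_of_lt h
    rw [show j + d + 1 = j + (d + 1) by omega, diagonalArray_add_left, growthDiagram_zero_right]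

theorem isHorizontalStrip_growthDiagram_zero_left (y : ℕ) :
    IsHorizontalStrip (π.growthDiagram 0 (y + 1)) (π.growthDiagram 0 y) := fun k => by
  simp only [growthDiagram_zero_left]
  refine ⟨π.row_decr k (k + y), ?_⟩
  rw [show k + 1 + y = k + (y + 1) by omega]
  exact π.col_decr k _

theorem isHorizontalStrip_growthDiagram_zero_right (x : ℕ) :
    IsHorizontalStrip (π.growthDiagram (x + 1) 0) (π.growthDiagram x 0) := fun k => by
  simp only [growthDiagram_zero_right]
  refine ⟨π.col_decr (k + x) k, ?_⟩
  rw [show k + 1 + x = k + (x + 1) by omega]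
  exact π.row_decr _ k

theorem isHorizontalStrip_growthDiagram : ∀ x y,
    IsHorizontalStrip (π.growthDiagram (x + 1) y) (π.growthDiagram x y) ∧
      IsHorizontalStrip (π.growthDiagram x (y + 1)) (π.growthDiagram x y)
  | 0, 0 => ⟨π.isHorizontalStrip_growthDiagram_zero_right 0,
      π.isHorizontalStrip_growthDiagram_zero_left 0⟩
  | x + 1, 0 => ⟨π.isHorizontalStrip_growthDiagram_zero_right (x + 1), by
      have h := isHorizontalStrip_growthDiagram x 0
      rw [growthDiagram_succ_succ]
      exact h.1.growthRuleInv_left h.2⟩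
  | 0, y + 1 => ⟨by
      have h := isHorizontalStrip_growthDiagram 0 y
      rw [growthDiagram_succ_succ]
      exact h.1.growthRuleInv_right h.2, π.isHorizontalStrip_growthDiagram_zero_left (y + 1)⟩
  | x + 1, y + 1 => ⟨by
      have h := isHorizontalStrip_growthDiagram (x + 1) y
      rw [growthDiagram_succ_succ]
      exact h.1.growthRuleInv_right h.2, by
      have h := isHorizontalStrip_growthDiagram x (y + 1)
      rw [growthDiagram_succ_succ]
      exact h.1.growthRuleInv_left h.2⟩

theorem growthDiagram_le_growthDiagram_zero_left (x y k : ℕ) :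
    π.growthDiagram x y k ≤ π.growthDiagram 0 y k := by
  induction x with
  | zero => rfl
  | succ x ih => exact ((π.isHorizontalStrip_growthDiagram x y).1 k).1.trans ih

theorem growthDiagram_le_growthDiagram_zero_right (x y k : ℕ) :
    π.growthDiagram x y k ≤ π.growthDiagram x 0 k := by
  induction y with
  | zero => rfl
  | succ y ih => exact ((π.isHorizontalStrip_growthDiagram x y).2 k).1.trans ih

theorem growthDiagram_of_le {N : ℕ} (hN : ∀ i j, N ≤ i ∨ N ≤ j → π.entry i j = 0) (x y : ℕ)
    (h : N ≤ x ∨ N ≤ y) : π.growthDiagram x y = 0 := by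
  funext k
  refine Nat.eq_zero_of_le_zero ?_
  rcases h with h | h
  · rw [← hN (k + x) k (by omega), ← growthDiagram_zero_right]
    exact π.growthDiagram_le_growthDiagram_zero_right x y k
  · rw [← hN k (k + y) (by omega), ← growthDiagram_zero_left]
    exact π.growthDiagram_le_growthDiagram_zero_left x y k

noncomputable def growthMatrix : (ℕ × ℕ) →₀ ℕ :=
  Finsupp.ofSupportFinite (fun p => π.growthDiagram p.1 p.2 0 -
      max (π.growthDiagram (p.1 + 1) p.2 0) (π.growthDiagram p.1 (p.2 + 1) 0)) <| by
    obtain ⟨N, hN⟩ := π.exists_entry_eq_zero_of_le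
    refine ((Set.finite_Iio N).prod (Set.finite_Iio N)).subset fun p hp => ?_
    simp only [Set.mem_prod, Set.mem_Iio]
    by_contra h
    exact hp (by simp [π.growthDiagram_of_le hN p.1 p.2 (by omega)])

theorem growthMatrix_apply (x y : ℕ) : π.growthMatrix (x, y) = π.growthDiagram x y 0 -
    max (π.growthDiagram (x + 1) y 0) (π.growthDiagram x (y + 1) 0) := rfl

theorem growthDiagram_eq (x y : ℕ) : π.growthDiagram x y =
    growthRule (π.growthDiagram (x + 1) (y + 1)) (π.growthDiagram (x + 1) y)
      (π.growthDiagram x (y + 1)) (π.growthMatrix (x, y)) := by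
  have h := π.isHorizontalStrip_growthDiagram x y
  rw [growthDiagram_succ_succ, growthMatrix_apply, growthRule_growthRuleInv h.1 h.2]

theorem growth_growthMatrix : growth π.growthMatrix = π.growthDiagram :=
  let ⟨_, hN⟩ := π.exists_entry_eq_zero_of_le
  (eq_growth π.growthDiagram_eq (π.growthDiagram_of_le hN)).symm

theorem ofGrowth_growthMatrix : ofGrowth π.growthMatrix = π :=
  ext (by rw [ofGrowth_entry, growth_growthMatrix, diagonalArray_growthDiagram])

end PlanePartition

theorem growthDiagram_ofGrowth (m : (ℕ × ℕ) →₀ ℕ) :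
    ∀ x y, (ofGrowth m).growthDiagram x y = growth m x y
  | 0, y => funext fun k => by
    rw [PlanePartition.growthDiagram_zero_left, ofGrowth_entry, diagonalArray_add_right]
  | x + 1, 0 => funext fun k => by
    rw [PlanePartition.growthDiagram_zero_right, ofGrowth_entry, diagonalArray_add_left]
  | x + 1, y + 1 => by
    rw [PlanePartition.growthDiagram_succ_succ, growthDiagram_ofGrowth m (x + 1) y,
      growthDiagram_ofGrowth m x (y + 1), growthDiagram_ofGrowth m x y, growth_eq m x y,
      growthRuleInv_growthRule (isHorizontalStrip_growth m (x + 1) y).2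
        (isHorizontalStrip_growth m x (y + 1)).1]

theorem growthMatrix_ofGrowth (m : (ℕ × ℕ) →₀ ℕ) : (ofGrowth m).growthMatrix = m := by
  ext ⟨x, y⟩
  have h : growth m x y 0 = max (growth m (x + 1) y 0) (growth m x (y + 1) 0) + m (x, y) := by
    rw [growth_eq m x y]
    rfl
  rw [PlanePartition.growthMatrix_apply, growthDiagram_ofGrowth, growthDiagram_ofGrowth,
    growthDiagram_ofGrowth, h, Nat.add_sub_cancel_left]

noncomputable def traceEquiv : PlanePartition ≃ ((ℕ × ℕ) →₀ ℕ) where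
  toFun := PlanePartition.growthMatrix
  invFun := ofGrowth
  left_inv := PlanePartition.ofGrowth_growthMatrix
  right_inv := growthMatrix_ofGrowth

/-- The pair statistics `(des, |·|_{uh})` and `(tr, |·|)` are
equidistributed over all plane partitions (coefficient-wise form of
`Σ_π t^{des π} q^{|π|_{uh}} = Π_{k≥1}(1 - t q^k)^{-k} = Σ_π t^{tr π} q^{|π|}`,
the middle product being Stanley's known trace generating function). -/
theorem des_uphook_equidistributed_with_trace_volume (a b : ℕ) :
    Nat.card {π : PlanePartition // π.des = a ∧ π.uhvol = b} =
    Nat.card {π : PlanePartition // π.trace = a ∧ π.vol = b} := by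
  let S := {m : (ℕ × ℕ) →₀ ℕ //
    m.degree = a ∧ Finsupp.weight (fun p : ℕ × ℕ => p.1 + p.2 + 1) m = b}
  have e₁ : {π : PlanePartition // π.des = a ∧ π.uhvol = b} ≃ S :=
    descentEquiv.subtypeEquiv fun π => by
      rw [PlanePartition.des_eq_degree, PlanePartition.uhvol_eq_weight]
      rfl
  have e₂ : S ≃ {π : PlanePartition // π.trace = a ∧ π.vol = b} :=
    traceEquiv.symm.subtypeEquiv fun m => by
      rw [show traceEquiv.symm m = ofGrowth m from rfl, trace_ofGrowth, vol_ofGrowth]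
  exact Nat.card_congr (e₁.trans e₂)
end

section
/- The total number of strict tableaux with filling [n] whose shape fits in the n×m rectangle equals m^n: Σ_{λ ⊆ (n^m)} f_λ(n) = m^n, where f_λ(n) is the number of strict tableaux of shape λ with filling {1,…,n}. -/
open scoped BigOperators

/-- `π` is a strict tableau with filling `[n]` and shape contained in the rectangle
with `m` rows and `n` columns: entries lie in `{1, …, n}` and each `v ∈ [n]` appears
in exactly one column. -/
def IsStrictTableau (π : PlanePartition) (n m : ℕ) : Prop :=
  π.RowsLE m ∧ π.ColsLE n ∧ π.EntriesLE n ∧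
    ∀ v, 1 ≤ v → v ≤ n → π.colCount v = 1

namespace StrictAux

lemma pp_ext {π₁ π₂ : PlanePartition} (h : ∀ i j, π₁.entry i j = π₂.entry i j) : π₁ = π₂ := by
  have h' : π₁.entry = π₂.entry := by funext i j; exact h i j
  cases π₁; cases π₂; cases h'; rfl

lemma entry_anti_row (π : PlanePartition) (i : ℕ) {j j' : ℕ} (h : j ≤ j') :
    π.entry i j' ≤ π.entry i j := by
  induction j', h using Nat.le_induction with
  | base => exact le_rfl
  | succ k hk ih => exact le_trans (π.row_decr i k) ih

lemma entry_anti_col (π : PlanePartition) (j : ℕ) {i i' : ℕ} (h : i ≤ i') :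
    π.entry i' j ≤ π.entry i j := by
  induction i', h using Nat.le_induction with
  | base => exact le_rfl
  | succ k hk ih => exact le_trans (π.col_decr k j) ih

lemma col_zero_finite (π : PlanePartition) (j : ℕ) : {i | π.entry i j ≠ 0}.Finite := by
  have : {i | π.entry i j ≠ 0} = (fun i => (i, j)) ⁻¹' {p : ℕ × ℕ | π.entry p.1 p.2 ≠ 0} := rfl
  rw [this]
  exact π.finite_support.preimage (fun a _ b _ h => congrArg Prod.fst h)

/-- column height -/
noncomputable def ht (π : PlanePartition) (j : ℕ) : ℕ := sInf {i | π.entry i j = 0}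

lemma ht_set_nonempty (π : PlanePartition) (j : ℕ) : {i | π.entry i j = 0}.Nonempty := by
  obtain ⟨i, hi⟩ := ((col_zero_finite π j).infinite_compl).nonempty
  exact ⟨i, not_not.mp hi⟩

lemma entry_eq_zero_iff (π : PlanePartition) (j i : ℕ) : π.entry i j = 0 ↔ ht π j ≤ i := by
  constructor
  · intro h; exact Nat.sInf_le h
  · intro h
    have h0 : π.entry (ht π j) j = 0 := Nat.sInf_mem (ht_set_nonempty π j)
    have := entry_anti_col π j h
    omega

lemma entry_ne_zero_iff (π : PlanePartition) (j i : ℕ) : π.entry i j ≠ 0 ↔ i < ht π j := by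
  rw [ne_eq, entry_eq_zero_iff]; omega

/-- decrement every entry by 1 (removing all the 1's). -/
def decr (π : PlanePartition) : PlanePartition where
  entry i j := π.entry i j - 1
  row_decr i j := Nat.sub_le_sub_right (π.row_decr i j) 1
  col_decr i j := Nat.sub_le_sub_right (π.col_decr i j) 1
  finite_support := π.finite_support.subset (by intro p hp; simp only [Set.mem_setOf_eq] at hp ⊢; omega)

/-- the column into which a new block of 1's ending at row `b` must go. -/
noncomputable def icol (π : PlanePartition) (b : ℕ) : ℕ := sInf {j | ht π j ≤ b}

/-- increment all entries and insert 1's in column `icol π b`, rows `ht .. ≤ i ≤ b`. -/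
noncomputable def insert1 (π : PlanePartition) (b : ℕ) : PlanePartition where
  entry i j := if π.entry i j ≠ 0 then π.entry i j + 1
    else if j = icol π b ∧ i ≤ b then 1 else 0
  row_decr i j := by
    have hr := π.row_decr i j
    have hkey : j + 1 = icol π b → i ≤ b → π.entry i j ≠ 0 := by
      intro hj hi
      have hns : j ∉ {j | ht π j ≤ b} :=
        Nat.notMem_of_lt_sInf (show j < sInf {j | ht π j ≤ b} by
          unfold icol at hj; omega)
      have hns' : ¬ ht π j ≤ b := hns
      rw [entry_ne_zero_iff]; omega
    by_cases h3 : j + 1 = icol π b ∧ i ≤ b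
    · have h4 := hkey h3.1 h3.2
      simp only [ne_eq, h4, not_false_eq_true, if_true, if_pos h3]
      split <;> omega
    · simp only [ne_eq, if_neg h3]
      split <;> split <;> omega
  col_decr i j := by
    have hr := π.col_decr i j
    by_cases h3 : j = icol π b ∧ i + 1 ≤ b
    · have h4 : j = icol π b ∧ i ≤ b := ⟨h3.1, by omega⟩
      simp only [ne_eq, if_pos h3, if_pos h4]
      split <;> split <;> omega
    · simp only [ne_eq, if_neg h3]
      split <;> split <;> omega
  finite_support := by
    apply Set.Finite.subset (π.finite_support.union
      (Set.finite_Iic ((b, icol π b) : ℕ × ℕ)))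
    intro p hp
    simp only [Set.mem_setOf_eq, Set.mem_union, Set.mem_Iic] at hp ⊢
    by_cases h : π.entry p.1 p.2 ≠ 0
    · exact Or.inl h
    · simp only [h, if_false, ite_not, if_pos] at hp
      right
      by_cases h3 : p.2 = icol π b ∧ p.1 ≤ b
      · exact Prod.mk_le_mk.mpr ⟨h3.2, le_of_eq h3.1⟩
      · simp [h, h3] at hp

open PlanePartition

lemma icol_mem {π : PlanePartition} {b : ℕ} (hne : {j | ht π j ≤ b}.Nonempty) :
    ht π (icol π b) ≤ b := Nat.sInf_mem hne

lemma insert1_entry (π : PlanePartition) (b i j : ℕ) :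
    (insert1 π b).entry i j = if π.entry i j ≠ 0 then π.entry i j + 1
      else if j = icol π b ∧ i ≤ b then 1 else 0 := rfl

lemma insert1_ones (π : PlanePartition) (b : ℕ) (hne : {j | ht π j ≤ b}.Nonempty) :
    {j | ∃ i, (insert1 π b).entry i j = 1} = {icol π b} := by
  ext j
  simp only [Set.mem_setOf_eq, Set.mem_singleton_iff, insert1_entry]
  constructor
  · rintro ⟨i, hi⟩
    by_cases h : π.entry i j ≠ 0
    · rw [if_pos h] at hi; omega
    · rw [if_neg h] at hi
      by_cases h2 : j = icol π b ∧ i ≤ b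
      · exact h2.1
      · simp [h2] at hi
  · rintro rfl
    refine ⟨b, ?_⟩
    have h0 : π.entry b (icol π b) = 0 := (entry_eq_zero_iff π _ b).mpr (icol_mem hne)
    simp [h0]

lemma row_strict {π : PlanePartition} {N m : ℕ} (h : IsStrictTableau π N m) (i j : ℕ)
    (hne : π.entry i (j+1) ≠ 0) : π.entry i (j+1) < π.entry i j := by
  rcases Nat.lt_or_ge (π.entry i (j+1)) (π.entry i j) with hlt | hge
  · exact hlt
  · exfalso
    have heq : π.entry i (j+1) = π.entry i j := le_antisymm (π.row_decr i j) hge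
    set v := π.entry i (j+1) with hv
    have hcc : π.colCount v = 1 := h.2.2.2 v (by omega) (heq ▸ h.2.2.1 i j)
    obtain ⟨a, ha⟩ := Set.ncard_eq_one.mp hcc
    have h1 : j ∈ {j | ∃ i, π.entry i j = v} := ⟨i, heq.symm⟩
    have h2 : j + 1 ∈ {j | ∃ i, π.entry i j = v} := ⟨i, rfl⟩
    rw [ha] at h1 h2
    simp only [Set.mem_singleton_iff] at h1 h2
    omega

lemma entry_add_col_le {π : PlanePartition} {N m : ℕ} (h : IsStrictTableau π N m) (i : ℕ) :
    ∀ j, π.entry i j ≠ 0 → π.entry i j + j ≤ N := by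
  intro j
  induction j with
  | zero => intro _; simpa using h.2.2.1 i 0
  | succ j ih =>
    intro hne
    have hlt := row_strict h i j hne
    have hne' : π.entry i j ≠ 0 := by omega
    have := ih hne'
    omega

lemma decr_isST {π : PlanePartition} {n m : ℕ} (h : IsStrictTableau π (n+1) m) :
    IsStrictTableau (decr π) n m := by
  obtain ⟨hR, hC, hE, hc⟩ := h
  refine ⟨fun i j hi => ?_, fun i j hj => ?_, fun i j => ?_, fun v hv1 hvn => ?_⟩
  · show π.entry i j - 1 = 0; rw [hR i j hi]
  · show π.entry i j - 1 = 0
    by_cases hz : π.entry i j = 0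
    · rw [hz]
    · have := entry_add_col_le ⟨hR, hC, hE, hc⟩ i j hz
      omega
  · show π.entry i j - 1 ≤ n; have := hE i j; omega
  · show ({j | ∃ i, π.entry i j - 1 = v}).ncard = 1
    have hs : {j | ∃ i, π.entry i j - 1 = v} = {j | ∃ i, π.entry i j = v + 1} := by
      ext j
      constructor <;> rintro ⟨i, hi⟩ <;> exact ⟨i, by omega⟩
    rw [hs]
    exact hc (v+1) (by omega) (by omega)

lemma insert1_isST {π : PlanePartition} {n m b : ℕ} (h : IsStrictTableau π n m) (hb : b < m) :
    IsStrictTableau (insert1 π b) (n+1) m := by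
  obtain ⟨hR, hC, hE, hc⟩ := h
  have hnmem : n ∈ {j | ht π j ≤ b} := by
    have : π.entry 0 n = 0 := hC 0 n le_rfl
    have := (entry_eq_zero_iff π n 0).mp this
    simp only [Set.mem_setOf_eq]
    omega
  have hne : {j | ht π j ≤ b}.Nonempty := ⟨n, hnmem⟩
  have hicol : icol π b ≤ n := Nat.sInf_le hnmem
  refine ⟨fun i j hi => ?_, fun i j hj => ?_, fun i j => ?_, fun v hv1 hvn => ?_⟩
  · rw [insert1_entry]
    have h0 : π.entry i j = 0 := hR i j hi
    simp only [h0, ne_eq, not_true_eq_false, if_false, not_not, if_true]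
    have : ¬ i ≤ b := by omega
    simp [this]
  · rw [insert1_entry]
    have h0 : π.entry i j = 0 := hC i j (by omega)
    have : j ≠ icol π b := by omega
    simp [h0, this]
  · rw [insert1_entry]
    have := hE i j
    split <;> [omega; (split <;> omega)]
  · show ({j | ∃ i, (insert1 π b).entry i j = v}).ncard = 1
    rcases Nat.eq_or_lt_of_le hv1 with hv | hv
    · rw [← hv, insert1_ones π b hne]
      simp
    · have hs : {j | ∃ i, (insert1 π b).entry i j = v} = {j | ∃ i, π.entry i j = v - 1} := by
        ext j
        simp only [Set.mem_setOf_eq, insert1_entry]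
        constructor
        · rintro ⟨i, hi⟩
          by_cases hp : π.entry i j ≠ 0
          · rw [if_pos hp] at hi; exact ⟨i, by omega⟩
          · rw [if_neg hp] at hi
            split at hi <;> omega
        · rintro ⟨i, hi⟩
          have hp : π.entry i j ≠ 0 := by omega
          exact ⟨i, by rw [if_pos hp]; omega⟩
      rw [hs]
      exact hc (v-1) (by omega) (by omega)

/-- the unique column of `π` containing the entry 1. -/
noncomputable def onecol (π : PlanePartition) : ℕ := sInf {j | ∃ i, π.entry i j = 1}

section Forward
variable {π : PlanePartition} {n m : ℕ}

lemma onecol_spec (h : IsStrictTableau π (n+1) m) :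
    {j | ∃ i, π.entry i j = 1} = {onecol π} := by
  obtain ⟨a, ha⟩ := Set.ncard_eq_one.mp (h.2.2.2 1 le_rfl (by omega))
  have : onecol π = a := by rw [onecol, ha, csInf_singleton]
  rw [ha, this]

lemma ht_onecol_pos (h : IsStrictTableau π (n+1) m) : 1 ≤ ht π (onecol π) := by
  have : onecol π ∈ {j | ∃ i, π.entry i j = 1} := by rw [onecol_spec h]; rfl
  obtain ⟨i, hi⟩ := this
  have : i < ht π (onecol π) := (entry_ne_zero_iff π _ i).mp (by omega)
  omega

lemma entry_last_one (h : IsStrictTableau π (n+1) m) :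
    π.entry (ht π (onecol π) - 1) (onecol π) = 1 := by
  have hc : onecol π ∈ {j | ∃ i, π.entry i j = 1} := by rw [onecol_spec h]; rfl
  obtain ⟨i, hi⟩ := hc
  have hi' : i < ht π (onecol π) := (entry_ne_zero_iff π _ i).mp (by omega)
  have h1 : π.entry (ht π (onecol π) - 1) (onecol π) ≤ 1 := by
    calc π.entry (ht π (onecol π) - 1) (onecol π) ≤ π.entry i (onecol π) :=
          entry_anti_col π _ (by omega)
      _ = 1 := hi
  have h2 : π.entry (ht π (onecol π) - 1) (onecol π) ≠ 0 := by
    rw [entry_ne_zero_iff]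
    have := ht_onecol_pos h
    omega
  omega

lemma bval_lt (h : IsStrictTableau π (n+1) m) : ht π (onecol π) - 1 < m := by
  by_contra hm
  have := h.1 (ht π (onecol π) - 1) (onecol π) (by omega)
  rw [entry_last_one h] at this
  omega

end Forward

section Inverse
variable {π : PlanePartition} {n m : ℕ}

lemma icol_decr (h : IsStrictTableau π (n+1) m) :
    icol (decr π) (ht π (onecol π) - 1) = onecol π := by
  have hmem : onecol π ∈ {j | ht (decr π) j ≤ ht π (onecol π) - 1} := by
    have h1 : (decr π).entry (ht π (onecol π) - 1) (onecol π) = 0 := by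
      show π.entry (ht π (onecol π) - 1) (onecol π) - 1 = 0
      rw [entry_last_one h]
    exact (entry_eq_zero_iff (decr π) _ _).mp h1
  apply le_antisymm (Nat.sInf_le hmem)
  refine le_csInf ⟨onecol π, hmem⟩ ?_
  intro j hj
  by_contra hlt
  push_neg at hlt
  have h1 : (decr π).entry (ht π (onecol π) - 1) j = 0 :=
    (entry_eq_zero_iff (decr π) j _).mpr hj
  have h2 : π.entry (ht π (onecol π) - 1) j ≤ 1 := by
    have : π.entry (ht π (onecol π) - 1) j - 1 = 0 := h1
    omega
  have h3 : 1 ≤ π.entry (ht π (onecol π) - 1) j := by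
    have := entry_anti_row π (ht π (onecol π) - 1) (le_of_lt hlt)
    rw [entry_last_one h] at this
    omega
  have h4 : j ∈ {j | ∃ i, π.entry i j = 1} := ⟨ht π (onecol π) - 1, by omega⟩
  rw [onecol_spec h] at h4
  simp only [Set.mem_singleton_iff] at h4
  omega

lemma insert1_decr (h : IsStrictTableau π (n+1) m) :
    insert1 (decr π) (ht π (onecol π) - 1) = π := by
  apply pp_ext
  intro i j
  rw [insert1_entry, icol_decr h]
  show (if π.entry i j - 1 ≠ 0 then (π.entry i j - 1) + 1
      else if j = onecol π ∧ i ≤ ht π (onecol π) - 1 then 1 else 0) = π.entry i j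
  by_cases h2 : π.entry i j - 1 ≠ 0
  · rw [if_pos h2]; omega
  · rw [if_neg h2]
    by_cases h3 : j = onecol π ∧ i ≤ ht π (onecol π) - 1
    · rw [if_pos h3]
      have hpos := ht_onecol_pos h
      have hnz : π.entry i j ≠ 0 := by
        rw [h3.1, entry_ne_zero_iff]
        have := h3.2
        omega
      omega
    · rw [if_neg h3]
      by_contra hne
      have h1 : π.entry i j = 1 := by omega
      have h4 : j ∈ {j | ∃ i, π.entry i j = 1} := ⟨i, h1⟩
      rw [onecol_spec h] at h4
      simp only [Set.mem_singleton_iff] at h4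
      have hlt : i < ht π (onecol π) := by
        have hnz : π.entry i (onecol π) ≠ 0 := by rw [← h4]; omega
        exact (entry_ne_zero_iff π _ i).mp hnz
      exact h3 ⟨h4, by omega⟩

lemma icol_set_nonempty (h : IsStrictTableau π n m) (b : ℕ) :
    {j | ht π j ≤ b}.Nonempty := by
  refine ⟨n, ?_⟩
  have h0 : π.entry 0 n = 0 := h.2.1 0 n le_rfl
  have := (entry_eq_zero_iff π n 0).mp h0
  simp only [Set.mem_setOf_eq]
  omega

lemma onecol_insert1 (b : ℕ) (hne : {j | ht π j ≤ b}.Nonempty) :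
    onecol (insert1 π b) = icol π b := by
  rw [onecol, insert1_ones π b hne, csInf_singleton]

lemma ht_insert1 (b : ℕ) (hne : {j | ht π j ≤ b}.Nonempty) :
    ht (insert1 π b) (icol π b) = b + 1 := by
  have hic : ht π (icol π b) ≤ b := icol_mem hne
  have hset : {i | (insert1 π b).entry i (icol π b) = 0} = Set.Ici (b+1) := by
    ext i
    rw [Set.mem_setOf_eq, Set.mem_Ici, insert1_entry]
    constructor
    · intro hi
      by_cases hp : π.entry i (icol π b) ≠ 0
      · rw [if_pos hp] at hi; omega
      · rw [if_neg hp] at hi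
        by_cases h2 : i ≤ b
        · rw [if_pos (⟨rfl, h2⟩ : icol π b = icol π b ∧ i ≤ b)] at hi
          omega
        · omega
    · intro hi
      have hp : π.entry i (icol π b) = 0 := by
        rw [entry_eq_zero_iff]; omega
      rw [if_neg (by omega : ¬ π.entry i (icol π b) ≠ 0),
        if_neg (fun hc => absurd hc.2 (by omega) : ¬ (icol π b = icol π b ∧ i ≤ b))]
  rw [ht, hset, csInf_Ici]

lemma decr_insert1 (b : ℕ) : decr (insert1 π b) = π := by
  apply pp_ext
  intro i j
  show (insert1 π b).entry i j - 1 = π.entry i j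
  rw [insert1_entry]
  by_cases hp : π.entry i j ≠ 0
  · rw [if_pos hp]; omega
  · rw [if_neg hp]
    split <;> omega

end Inverse

noncomputable def stepEquiv (n m : ℕ) :
    {π : PlanePartition // IsStrictTableau π (n+1) m} ≃
      (Fin m × {π : PlanePartition // IsStrictTableau π n m}) where
  toFun π := ⟨⟨ht π.1 (onecol π.1) - 1, bval_lt π.2⟩, ⟨decr π.1, decr_isST π.2⟩⟩
  invFun x := ⟨insert1 x.2.1 x.1.1, insert1_isST x.2.2 x.1.2⟩
  left_inv := fun ⟨π, hπ⟩ => Subtype.ext (insert1_decr hπ)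
  right_inv := fun x => by
    obtain ⟨⟨b, hb⟩, ⟨π, hπ⟩⟩ := x
    have hne := icol_set_nonempty hπ b
    refine Prod.ext ?_ ?_
    · apply Fin.ext
      show ht (insert1 π b) (onecol (insert1 π b)) - 1 = b
      rw [onecol_insert1 b hne, ht_insert1 b hne]
      omega
    · exact Subtype.ext (decr_insert1 b)

def zeroPP : PlanePartition :=
  ⟨fun _ _ => 0, fun _ _ => le_rfl, fun _ _ => le_rfl, by simp⟩

lemma ist_zero (m : ℕ) : IsStrictTableau zeroPP 0 m :=
  ⟨fun _ _ _ => rfl, fun _ _ _ => rfl, fun _ _ => le_rfl, fun v h1 h0 => by omega⟩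

end StrictAux


open StrictAux

/-- `Σ_{λ ⊆ (n^m)} f_λ(n) = m^n`: the total number of strict
tableaux with filling `[n]` whose shape fits in the `n × m` rectangle is `m^n`. -/
theorem card_strict_tableaux (n m : ℕ) :
    Nat.card {π : PlanePartition // IsStrictTableau π n m} = m ^ n := by
  induction n with
  | zero =>
    have huniq : ∀ x : {π : PlanePartition // IsStrictTableau π 0 m},
        x = ⟨zeroPP, ist_zero m⟩ := by
      rintro ⟨π, hπ⟩
      apply Subtype.ext
      apply pp_ext
      intro i j
      exact hπ.2.1 i j (Nat.zero_le j)
    haveI : Unique {π : PlanePartition // IsStrictTableau π 0 m} :=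
      ⟨⟨⟨zeroPP, ist_zero m⟩⟩, huniq⟩
    rw [Nat.card_unique, pow_zero]
  | succ n ih =>
    rw [Nat.card_congr (stepEquiv n m), Nat.card_prod, Nat.card_eq_fintype_card,
      Fintype.card_fin, ih, pow_succ]
    ring
end
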